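/- arXiv:2511.05806 — 5 statements merged into one kernel-verified Lean document; each statement's English description precedes it below -/
import Mathlib

section
/- Let (A, B) be a suitable pair of sequences of positive integers, A = (a_1, …, a_p), B = (b_1, …, b_p), with compound sequence CS = C(A,B) = (n_0, …, n_p). Then CS is a telescopic sequence, and c(CS) = (a_1, a_2, …, a_p); that is, setting d_i = gcd(n_0, …, n_i), one has d_{i−1}/d_i = a_i and a_i · n_i ∈ ⟨n_0, …, n_{i−1}⟩ for all i = 1, …, p. -/
/-- The monoid `⟨t_0, …, t_{n-1}⟩` of all nonnegative integer linear combinations of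
the first `n` terms of the sequence `t`. -/
def genBy (t : ℕ → ℕ) (n : ℕ) : Set ℕ :=
  {s | ∃ x : ℕ → ℕ, s = ∑ i ∈ Finset.range n, x i * t i}

/-- `d_i = gcd(t_0, …, t_i)`. -/
def seqD (t : ℕ → ℕ) (i : ℕ) : ℕ := Finset.gcd (Finset.range (i + 1)) t

/-- `c_j = d_{j-1} / d_j` (for `j ≥ 1`). -/
def seqC (t : ℕ → ℕ) (j : ℕ) : ℕ := seqD t (j - 1) / seqD t j

/-- The sequence `(t_0, …, t_k)` of positive integers is telescopic if
`c_j · t_j ∈ ⟨t_0, …, t_{j-1}⟩` for every `j = 1, …, k`. -/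
def IsTelescopic (t : ℕ → ℕ) (k : ℕ) : Prop :=
  (∀ i ≤ k, 0 < t i) ∧ ∀ j, 1 ≤ j → j ≤ k → seqC t j * t j ∈ genBy t j

/-- `(A, B)` (with terms indexed `1, …, p`) is a suitable pair of sequences of positive
integers: `gcd (A i) (B j) = 1` for all `j ≤ i`. -/
def IsSuitablePair (A B : ℕ → ℕ) (p : ℕ) : Prop :=
  (∀ i, 1 ≤ i → i ≤ p → 0 < A i ∧ 0 < B i) ∧
    ∀ i j, 1 ≤ j → j ≤ i → i ≤ p → Nat.gcd (A i) (B j) = 1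

/-- The compound sequence `C(A,B) = (n_0, …, n_p)`: `n_i = b_1 ⋯ b_i · a_{i+1} ⋯ a_p`
(equivalently `n_0 = a_1 ⋯ a_p` and `n_i = n_{i-1} b_i / a_i`). -/
def compoundSeq (A B : ℕ → ℕ) (p : ℕ) (i : ℕ) : ℕ :=
  (∏ j ∈ Finset.Icc 1 i, B j) * ∏ j ∈ Finset.Icc (i + 1) p, A j

/-!
Write `n_i = (b_1 ⋯ b_i) · P_i` with `P_i = a_{i+1} ⋯ a_p`. Since `a_{i+1}` is coprime to
`b_1 ⋯ b_{i+1}`, induction on `i` gives `gcd(n_0, …, n_i) = P_i`, so `d_{i-1}/d_i = a_i`;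
and `a_i n_i = b_i n_{i-1}` is a multiple of an earlier term.
-/

open Finset

lemma prod_Icc_eq_mul_prod_Icc_add_one {M : Type*} [CommMonoid M] (f : ℕ → M) {a b : ℕ}
    (h : a ≤ b) : ∏ j ∈ Icc a b, f j = f a * ∏ j ∈ Icc (a + 1) b, f j := by
  rw [← mul_prod_Ioc_eq_prod_Icc h, Icc_add_one_left_eq_Ioc]

lemma seqD_zero (t : ℕ → ℕ) : seqD t 0 = t 0 := by
  simp [seqD]

lemma seqD_succ (t : ℕ → ℕ) (i : ℕ) : seqD t (i + 1) = Nat.gcd (t (i + 1)) (seqD t i) := by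
  rw [seqD, range_add_one, gcd_insert]
  rfl

lemma mul_mem_genBy (t : ℕ → ℕ) {i n : ℕ} (h : i < n) (b : ℕ) : b * t i ∈ genBy t n :=
  ⟨Pi.single i b, by rw [sum_eq_single_of_mem i (mem_range.2 h) (by simp_all)]; simp⟩

section Compound

variable {A B : ℕ → ℕ} {p : ℕ}

lemma compoundSeq_pos (hA : ∀ i, 1 ≤ i → i ≤ p → 0 < A i) (hB : ∀ i, 1 ≤ i → i ≤ p → 0 < B i)
    {i : ℕ} (hi : i ≤ p) : 0 < compoundSeq A B p i :=
  Nat.mul_pos (prod_pos fun j hj ↦ hB j (mem_Icc.1 hj).1 ((mem_Icc.1 hj).2.trans hi))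
    (prod_pos fun j hj ↦ hA j (by grind) (mem_Icc.1 hj).2)

lemma mul_compoundSeq_succ {i : ℕ} (hi : i + 1 ≤ p) :
    A (i + 1) * compoundSeq A B p (i + 1) = B (i + 1) * compoundSeq A B p i := by
  rw [compoundSeq, compoundSeq, prod_Icc_succ_top (by omega),
    prod_Icc_eq_mul_prod_Icc_add_one A hi]
  ring

lemma seqD_compoundSeq (hcop : ∀ i j, 1 ≤ j → j ≤ i → i ≤ p → Nat.gcd (A i) (B j) = 1)
    {i : ℕ} (hi : i ≤ p) : seqD (compoundSeq A B p) i = ∏ j ∈ Icc (i + 1) p, A j := by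
  induction i with
  | zero => simp [seqD_zero, compoundSeq]
  | succ i ih =>
    have hcoprime : Nat.Coprime (∏ j ∈ Icc 1 (i + 1), B j) (A (i + 1)) :=
      Nat.Coprime.prod_left fun j hj ↦
        Nat.coprime_comm.1 (hcop (i + 1) j (mem_Icc.1 hj).1 (mem_Icc.1 hj).2 hi)
    rw [seqD_succ, ih (by omega), prod_Icc_eq_mul_prod_Icc_add_one A hi, compoundSeq,
      Nat.gcd_mul_right, hcoprime.gcd_eq_one, one_mul]

lemma seqD_compoundSeq_div_seqD_succ (hA : ∀ i, 1 ≤ i → i ≤ p → 0 < A i)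
    (hcop : ∀ i j, 1 ≤ j → j ≤ i → i ≤ p → Nat.gcd (A i) (B j) = 1) {i : ℕ} (hi : i + 1 ≤ p) :
    seqD (compoundSeq A B p) i / seqD (compoundSeq A B p) (i + 1) = A (i + 1) := by
  rw [seqD_compoundSeq hcop (by omega), seqD_compoundSeq hcop hi,
    prod_Icc_eq_mul_prod_Icc_add_one A hi,
    Nat.mul_div_cancel _ (prod_pos fun j hj ↦ hA j (by grind) (mem_Icc.1 hj).2)]

end Compound

/-- A compound sequence `C(A,B) = (n_0, …, n_p)` of a suitable pair is telescopic with
`c(C(A,B)) = (a_1, …, a_p)`: that is, `d_{i-1}/d_i = a_i` and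
`a_i · n_i ∈ ⟨n_0, …, n_{i-1}⟩` for all `i = 1, …, p`. -/
theorem compound_is_telescopic (A B : ℕ → ℕ) (p : ℕ)
    (hsuit : IsSuitablePair A B p) :
    IsTelescopic (compoundSeq A B p) p ∧
      ∀ i, 1 ≤ i → i ≤ p →
        seqD (compoundSeq A B p) (i - 1) / seqD (compoundSeq A B p) i = A i ∧
        A i * compoundSeq A B p i ∈ genBy (compoundSeq A B p) i := by
  obtain ⟨hpos, hcop⟩ := hsuit
  have hA : ∀ i, 1 ≤ i → i ≤ p → 0 < A i := fun i h₁ h₂ ↦ (hpos i h₁ h₂).1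
  have hB : ∀ i, 1 ≤ i → i ≤ p → 0 < B i := fun i h₁ h₂ ↦ (hpos i h₁ h₂).2
  have hc : ∀ i, 1 ≤ i → i ≤ p →
      seqD (compoundSeq A B p) (i - 1) / seqD (compoundSeq A B p) i = A i ∧
        A i * compoundSeq A B p i ∈ genBy (compoundSeq A B p) i := by
    rintro (_ | i) h₁ hi
    · omega
    refine ⟨seqD_compoundSeq_div_seqD_succ hA hcop hi, ?_⟩
    rw [mul_compoundSeq_succ hi]
    exact mul_mem_genBy _ (Nat.lt_succ_self i) _
  refine ⟨⟨fun i hi ↦ compoundSeq_pos hA hB hi, fun j h₁ h₂ ↦ ?_⟩, hc⟩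
  rw [seqC, (hc j h₁ h₂).1]
  exact (hc j h₁ h₂).2
end

section
/- Let (A, B) be a suitable pair of sequences of positive integers, A = (a_1, …, a_p), B = (b_1, …, b_p), and let S = ⟨C(A,B)⟩. Define M_2(A) = max({0} ∪ {1 ≤ i ≤ p : a_i is even}) and m_2(B) = min({1 ≤ i ≤ p : b_i is even} ∪ {p+1}), and set α = ∏_{i = m_2(B)}^{p} a_i and β = ∏_{i = 1}^{M_2(A)} b_i (empty products equal 1). Then O(G(S)) − E(G(S)) = (αβ − 1)/2. -/
/-- `O(T)`: the number of odd elements of `T`. -/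
noncomputable def countOdd (T : Set ℕ) : ℕ := {x ∈ T | Odd x}.ncard

/-- `E(T)`: the number of even elements of `T`. -/
noncomputable def countEven (T : Set ℕ) : ℕ := {x ∈ T | Even x}.ncard

lemma negpow_sq (b : ℕ) : (-1:ℤ)^b * (-1)^b = 1 := by
  rw [← pow_add, ← two_mul, pow_mul]; norm_num

lemma negpow_sub {a b : ℕ} (h : b ≤ a) : (-1:ℤ)^(a-b) = (-1)^a * (-1)^b := by
  have h1 : (-1:ℤ)^(a-b) * (-1)^b = (-1)^a := by rw [← pow_add]; congr 1; omega
  calc (-1:ℤ)^(a-b) = (-1)^(a-b) * ((-1)^b * (-1)^b) := by rw [negpow_sq, mul_one]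
    _ = ((-1)^(a-b) * (-1)^b) * (-1)^b := by ring
    _ = (-1)^a * (-1)^b := by rw [h1]

lemma negsum (d : ℕ) : ∑ r ∈ Finset.range d, (-1:ℤ)^r = if Even d then 0 else 1 := by
  induction d with
  | zero => simp
  | succ n ih =>
    rw [Finset.sum_range_succ, ih]
    by_cases h : Even n
    · simp [h, h.neg_one_pow, Nat.even_add_one, h]
    · rw [Nat.not_even_iff_odd] at h
      simp only [h.neg_one_pow, Nat.even_add_one, Nat.not_even_iff_odd, if_pos h,
        if_neg (Nat.not_even_iff_odd.2 h)]
      ring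

lemma sum_Ico_reflect (d : ℕ) (f : ℕ → ℤ) :
    ∑ r ∈ Finset.Ico 1 d, f r = ∑ r ∈ Finset.Ico 1 d, f (d - r) := by
  refine Finset.sum_nbij' (i := fun r => d - r) (j := fun r => d - r) ?_ ?_ ?_ ?_ ?_ <;>
    simp only [Finset.mem_Ico]
  · intro a ha; omega
  · intro a ha; omega
  · intro a ha; omega
  · intro a ha; omega
  · intro a ha; congr 1; omega

lemma floor_pair {d m r : ℕ} (hr1 : 1 ≤ r) (hrd : r < d) (hco : Nat.Coprime d m) :
    m * r / d + m * (d - r) / d = m - 1 := by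
  have hd : 0 < d := by omega
  have hm : 0 < m := Nat.pos_of_ne_zero (by rintro rfl; simp [Nat.coprime_zero_right] at hco; omega)
  have htot : m * r + m * (d - r) = m * d := by rw [← Nat.mul_add]; congr 1; omega
  have hnd : ¬ d ∣ m * r := by
    intro h
    have : d ∣ r := (Nat.Coprime.dvd_of_dvd_mul_left hco h)
    have := Nat.le_of_dvd (by omega) this
    omega
  have hnd2 : ¬ d ∣ m * (d - r) := by
    intro h
    have hdd : d ∣ m * d := ⟨m, by ring⟩
    have h2 : d ∣ m * d - m * (d - r) := Nat.dvd_sub hdd h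
    have h3 : m * d - m * (d - r) = m * r := by omega
    exact hnd (h3 ▸ h2)
  have h1 := Nat.div_add_mod (m*r) d
  have h2 := Nat.div_add_mod (m*(d-r)) d
  have hs1 : 0 < (m*r) % d := Nat.pos_of_ne_zero (fun h => hnd (Nat.dvd_of_mod_eq_zero h))
  have hs2 : 0 < (m*(d-r)) % d := Nat.pos_of_ne_zero (fun h => hnd2 (Nat.dvd_of_mod_eq_zero h))
  have hlt1 : (m*r) % d < d := Nat.mod_lt _ hd
  have hlt2 : (m*(d-r)) % d < d := Nat.mod_lt _ hd
  set q1 := m*r/d with hq1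
  set q2 := m*(d-r)/d with hq2
  set s1 := (m*r) % d
  set s2 := (m*(d-r)) % d
  have key : d * q1 + d * q2 + (s1 + s2) = d * m := by nlinarith [h1, h2]
  have hdvd : d ∣ s1 + s2 := by
    have h4 : d ∣ d * q1 + d * q2 + (s1 + s2) := key ▸ ⟨m, rfl⟩
    exact (Nat.dvd_add_right (Dvd.dvd.add ⟨q1, rfl⟩ ⟨q2, rfl⟩)).mp h4
  have hsum : s1 + s2 = d := by
    rcases hdvd with ⟨c, hc⟩
    rcases c with _ | _ | c
    · omega
    · omega
    · exfalso; nlinarith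
  have key2 : d * (q1 + q2 + 1) = d * m := by rw [Nat.mul_add, Nat.mul_add]; omega
  have := Nat.eq_of_mul_eq_mul_left hd key2
  omega

lemma antisym_sum (d : ℕ) (f : ℕ → ℤ) (h : ∀ r ∈ Finset.Ico 1 d, f (d - r) = - f r) :
    ∑ r ∈ Finset.Ico 1 d, f r = 0 := by
  have h1 := sum_Ico_reflect d f
  have h2 : ∑ r ∈ Finset.Ico 1 d, f (d - r) = - ∑ r ∈ Finset.Ico 1 d, f r := by
    rw [← Finset.sum_neg_distrib]
    exact Finset.sum_congr rfl h
  omega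

lemma coprime_not_both_even {d m : ℕ} (hco : Nat.Coprime d m) (hde : Even d) : ¬ Even m := by
  intro hme
  have : (2:ℕ) ∣ Nat.gcd d m := Nat.dvd_gcd hde.two_dvd hme.two_dvd
  rw [hco] at this; omega

lemma sum_floor_even (d m : ℕ) (hd0 : 0 < d) (hde : Even d) (hco : Nat.Coprime d m) :
    2 * ∑ r ∈ Finset.range d, (-1:ℤ)^r * (m * r / d : ℕ) = 1 - m := by
  have hm : ¬ Even m := coprime_not_both_even hco hde
  have hm1 : 1 ≤ m := Nat.pos_of_ne_zero (by rintro rfl; exact hm Even.zero)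
  have hsplit : ∑ r ∈ Finset.range d, (-1:ℤ)^r * (m * r / d : ℕ)
      = ∑ r ∈ Finset.Ico 1 d, (-1:ℤ)^r * (m * r / d : ℕ) := by
    rw [Finset.range_eq_Ico, Finset.sum_eq_sum_Ico_succ_bot hd0]
    simp
  rw [hsplit]
  have hrefl := sum_Ico_reflect d (fun r => (-1:ℤ)^r * (m * r / d : ℕ))
  have h2S : 2 * ∑ r ∈ Finset.Ico 1 d, (-1:ℤ)^r * (m * r / d : ℕ)
      = ∑ r ∈ Finset.Ico 1 d,
          ((-1:ℤ)^r * (m*r/d : ℕ) + (-1)^(d-r) * (m*(d-r)/d : ℕ)) := by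
    rw [Finset.sum_add_distrib, two_mul]
    nth_rewrite 2 [hrefl]
    rfl
  rw [h2S]
  have heach : ∀ r ∈ Finset.Ico 1 d,
      ((-1:ℤ)^r * (m*r/d:ℕ) + (-1)^(d-r) * (m*(d-r)/d:ℕ)) = (-1)^r * ((m:ℤ)-1) := by
    intro r hr
    rw [Finset.mem_Ico] at hr
    have hp := floor_pair hr.1 hr.2 hco
    have h1 : (-1:ℤ)^(d-r) = (-1)^r := by
      rw [negpow_sub (le_of_lt hr.2), hde.neg_one_pow, one_mul]
    rw [h1, ← mul_add]
    congr 1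
    rw [← Nat.cast_add, hp, Nat.cast_sub hm1, Nat.cast_one]
  rw [Finset.sum_congr rfl heach, ← Finset.sum_mul]
  have hIco : ∑ r ∈ Finset.Ico 1 d, (-1:ℤ)^r = -1 := by
    have h0 := negsum d
    rw [if_pos hde] at h0
    have h2 : ∑ r ∈ Finset.range d, (-1:ℤ)^r
        = (-1:ℤ)^0 + ∑ r ∈ Finset.Ico 1 d, (-1:ℤ)^r := by
      rw [Finset.range_eq_Ico, Finset.sum_eq_sum_Ico_succ_bot hd0]
    rw [h0] at h2
    simp only [pow_zero] at h2
    linarith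
  rw [hIco]; ring

lemma sum_floor_odd_even (d m : ℕ) (hd0 : 0 < d) (hco : Nat.Coprime d m)
    (hme : Even m) : ∑ r ∈ Finset.range d, (-1:ℤ)^(m * r / d) = 1 := by
  rw [Finset.range_eq_Ico, Finset.sum_eq_sum_Ico_succ_bot hd0]
  have hz : ∑ r ∈ Finset.Ico 1 d, (-1:ℤ)^(m * r / d) = 0 := by
    apply antisym_sum
    intro r hr
    rw [Finset.mem_Ico] at hr
    have hp := floor_pair hr.1 hr.2 hco
    obtain ⟨x, hx⟩ : ∃ x, m*r/d = x := ⟨_, rfl⟩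
    obtain ⟨y, hy⟩ : ∃ y, m*(d-r)/d = y := ⟨_, rfl⟩
    rw [hx, hy] at hp
    rw [hx, hy]
    have hK : y = (m-1) - x := by omega
    rw [hK, negpow_sub (a := m-1) (b := x) (by omega)]
    have hm0 : 0 < m := Nat.pos_of_ne_zero
      (by rintro rfl; rw [Nat.coprime_zero_right] at hco; omega)
    have hodd : Odd (m - 1) := by
      rcases hme with ⟨k, hk⟩
      exact ⟨k - 1, by omega⟩
    rw [hodd.neg_one_pow]
    ring
  rw [hz]; simp

lemma sum_floor_odd_odd (d m : ℕ) (hd0 : 0 < d) (hdo : ¬ Even d) (hco : Nat.Coprime d m)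
    (hmo : ¬ Even m) : ∑ r ∈ Finset.range d, (-1:ℤ)^(r + m * r / d) = 1 := by
  rw [Finset.range_eq_Ico, Finset.sum_eq_sum_Ico_succ_bot hd0]
  have hm1 : 1 ≤ m := Nat.pos_of_ne_zero (by rintro rfl; exact hmo Even.zero)
  have hz : ∑ r ∈ Finset.Ico 1 d, (-1:ℤ)^(r + m * r / d) = 0 := by
    apply antisym_sum
    intro r hr
    rw [Finset.mem_Ico] at hr
    have hp := floor_pair hr.1 hr.2 hco
    obtain ⟨x, hx⟩ : ∃ x, m*r/d = x := ⟨_, rfl⟩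
    obtain ⟨y, hy⟩ : ∃ y, m*(d-r)/d = y := ⟨_, rfl⟩
    rw [hx, hy] at hp
    rw [hx, hy]
    have hK : (d - r) + y = (d + (m-1)) - (r + x) := by omega
    rw [hK, negpow_sub (a := d + (m-1)) (b := r + x) (by omega)]
    have hodd : Odd (d + (m - 1)) := by
      rcases Nat.not_even_iff_odd.1 hdo with ⟨k, hk⟩
      rcases Nat.not_even_iff_odd.1 hmo with ⟨l, hl⟩
      exact ⟨k + l, by omega⟩
    rw [hodd.neg_one_pow]
    ring
  rw [hz]; simp


lemma step_gaps (d m : ℕ) (hd : 0 < d) (hco : Nat.Coprime d m)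
    (S : Set ℕ) (hadd : ∀ a b, a ∈ S → b ∈ S → a + b ∈ S) (hmS : m ∈ S)
    (Gf : Finset ℕ) (hGf : ↑Gf = Sᶜ) :
    ∃ Gf2 : Finset ℕ, ↑Gf2 = {n : ℕ | ∃ s k, s ∈ S ∧ n = d * s + k * m}ᶜ ∧
      ∑ g ∈ Gf2, (-1:ℤ)^g =
        ∑ r ∈ Finset.range d, (((-1:ℤ)^m)^r *
          ((∑ z ∈ Gf, ((-1:ℤ)^d)^z) + ∑ k ∈ Finset.Icc 1 (m*r/d), ((-1:ℤ)^d)^k)) := by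
  classical
  set T : Set ℕ := {n : ℕ | ∃ s k, s ∈ S ∧ n = d * s + k * m} with hT
  have hzGf : ∀ z, z ∈ Gf ↔ z ∉ S := by
    intro z
    rw [← Finset.mem_coe, hGf, Set.mem_compl_iff]
  have hcm : ∀ c s, s ∈ S → s + c * m ∈ S := by
    intro c
    induction c with
    | zero => intro s hs; simpa using hs
    | succ c ih =>
      intro s hs
      have h1 := ih (s + m) (hadd s m hs hmS)
      have he : s + m + c * m = s + (c+1) * m := by ring
      rwa [he] at h1
  have R2 : ∀ r1 r2, r1 < d → r2 < d → (m*r1) % d = (m*r2) % d → r1 = r2 := by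
    intro r1 r2 h1 h2 h
    have hmod : r1 ≡ r2 [MOD d] := Nat.ModEq.cancel_left_of_coprime hco h
    have h3 := hmod
    unfold Nat.ModEq at h3
    rwa [Nat.mod_eq_of_lt h1, Nat.mod_eq_of_lt h2] at h3
  have R1 : ∀ n : ℕ, ∃ r, r < d ∧ (m*r) % d = n % d := by
    intro n
    have himg : Finset.image (fun r => m*r % d) (Finset.range d) = Finset.range d := by
      apply Finset.eq_of_subset_of_card_le
      · intro x hx
        simp only [Finset.mem_image, Finset.mem_range] at hx ⊢
        obtain ⟨r, _, hr2⟩ := hx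
        rw [← hr2]; exact Nat.mod_lt _ hd
      · rw [Finset.card_image_of_injOn, Finset.card_range]
        intro r1 h1 r2 h2 h
        simp only [Finset.coe_range, Set.mem_Iio] at h1 h2
        exact R2 r1 r2 h1 h2 h
    have hn : n % d ∈ Finset.range d := Finset.mem_range.2 (Nat.mod_lt _ hd)
    rw [← himg] at hn
    simp only [Finset.mem_image, Finset.mem_range] at hn
    obtain ⟨r, hr1, hr2⟩ := hn
    exact ⟨r, hr1, hr2⟩
  set part : ℕ → Finset ℕ := fun r =>
    Gf.image (fun z => d*z + m*r) ∪ (Finset.Icc 1 (m*r/d)).image (fun k => m*r - d*k)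
    with hpart
  have hdkle : ∀ r k, k ≤ m*r/d → d * k ≤ m * r := by
    intro r k hk
    have h1 := (Nat.le_div_iff_mul_le hd).1 hk
    have h2 := Nat.mul_comm k d
    omega
  have hmodpart : ∀ r, ∀ a ∈ part r, a % d = (m*r) % d := by
    intro r a ha
    rw [hpart] at ha
    simp only [Finset.mem_union, Finset.mem_image, Finset.mem_Icc] at ha
    rcases ha with ⟨z, _, hz⟩ | ⟨k, ⟨hk1, hk2⟩, hk⟩
    · subst hz
      have h1 : d*z + m*r = m*r + z*d := by ring
      rw [h1, Nat.add_mul_mod_self_right]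
    · have hdk : d * k ≤ m * r := hdkle r k hk2
      subst hk
      have hc := Nat.mul_comm k d
      have h1 : m*r - d*k + k*d = m*r := by omega
      calc (m*r - d*k) % d = (m*r - d*k + k*d) % d := by rw [Nat.add_mul_mod_self_right]
        _ = (m*r) % d := by rw [h1]
  have hnotT : ∀ r, r < d → ∀ a ∈ part r, a ∉ T := by
    intro r hr a ha haT
    obtain ⟨s, k', hs, heq⟩ := haT
    have hamod : a % d = (m * (k' % d)) % d := by
      have h1 : a % d = (m*k') % d := by
        have h2 : d*s + k'*m = m*k' + s*d := by ring
        rw [heq, h2, Nat.add_mul_mod_self_right]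
      rw [h1]
      exact (Nat.ModEq.mul_left m (Nat.mod_modEq k' d).symm)
    have hrk : r = k' % d :=
      R2 r (k' % d) hr (Nat.mod_lt _ hd) (by rw [← hamod, hmodpart r a ha])
    set q := k'/d with hq
    have hk'split : k' = d * q + r := by rw [hrk, hq]; exact (Nat.div_add_mod k' d).symm
    have h2 : d*s + k'*m = d*(s + q*m) + m*r := by rw [hk'split]; ring
    rw [hpart] at ha
    simp only [Finset.mem_union, Finset.mem_image, Finset.mem_Icc] at ha
    rcases ha with ⟨z, hzGf', hz⟩ | ⟨k, ⟨hk1, hk2⟩, hk⟩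
    · have h3 : d * z = d * (s + q*m) := by omega
      have h4 : z = s + q*m := Nat.eq_of_mul_eq_mul_left hd h3
      have h5 : z ∈ S := by rw [h4]; exact hcm q s hs
      exact (hzGf z).1 hzGf' h5
    · have hdk : d * k ≤ m * r := hdkle r k hk2
      have h6 : 0 < d * k := Nat.mul_pos hd (by omega)
      omega
  have hcover : ∀ n : ℕ, n ∉ T → ∃ r, r < d ∧ n ∈ part r := by
    intro n hnT
    obtain ⟨r, hr, hmodr⟩ := R1 n
    refine ⟨r, hr, ?_⟩
    rw [hpart]
    simp only [Finset.mem_union, Finset.mem_image, Finset.mem_Icc]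
    by_cases hc : m*r ≤ n
    · left
      have hdvd : d ∣ n - m*r := (Nat.modEq_iff_dvd' hc).mp hmodr
      obtain ⟨z, hz⟩ := hdvd
      refine ⟨z, ?_, by omega⟩
      rw [hzGf]
      intro hzS
      have hrm := Nat.mul_comm r m
      exact hnT ⟨z, r, hzS, by omega⟩
    · right
      push_neg at hc
      have hdvd : d ∣ m*r - n := (Nat.modEq_iff_dvd' (le_of_lt hc)).mp hmodr.symm
      obtain ⟨k, hk⟩ := hdvd
      have hdk := Nat.mul_comm d k
      refine ⟨k, ⟨?_, ?_⟩, by omega⟩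
      · rcases Nat.eq_zero_or_pos k with h | h
        · subst h; omega
        · exact h
      · rw [Nat.le_div_iff_mul_le hd]
        omega
  refine ⟨(Finset.range d).biUnion part, ?_, ?_⟩
  · ext n
    simp only [Finset.coe_biUnion, Finset.coe_range, Set.mem_iUnion, Finset.mem_coe,
      Set.mem_compl_iff, Set.mem_Iio]
    constructor
    · rintro ⟨r, hr, hn⟩
      exact hnotT r hr n hn
    · intro hn
      obtain ⟨r, hr, hmem⟩ := hcover n hn
      exact ⟨r, hr, hmem⟩
  · have hdisj : (↑(Finset.range d) : Set ℕ).PairwiseDisjoint part := by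
      intro r1 h1 r2 h2 hne
      simp only [Finset.coe_range, Set.mem_Iio] at h1 h2
      show Disjoint (part r1) (part r2)
      rw [Finset.disjoint_left]
      intro a ha1 ha2
      exact hne (R2 r1 r2 h1 h2 (by rw [← hmodpart r1 a ha1, hmodpart r2 a ha2]))
    rw [Finset.sum_biUnion hdisj]
    apply Finset.sum_congr rfl
    intro r hr
    rw [Finset.mem_range] at hr
    rw [hpart]
    have hdisj2 : Disjoint (Gf.image (fun z => d*z + m*r))
        ((Finset.Icc 1 (m*r/d)).image (fun k => m*r - d*k)) := by
      rw [Finset.disjoint_left]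
      intro a ha1 ha2
      simp only [Finset.mem_image, Finset.mem_Icc] at ha1 ha2
      obtain ⟨z, _, hz⟩ := ha1
      obtain ⟨k, ⟨hk1, hk2⟩, hk⟩ := ha2
      have hdk : d * k ≤ m * r := hdkle r k hk2
      have h6 : 0 < d*k := Nat.mul_pos hd (by omega)
      omega
    rw [Finset.sum_union hdisj2]
    have hinj1 : Set.InjOn (fun z => d*z + m*r) ↑Gf := by
      intro z1 _ z2 _ h
      simp only at h
      exact Nat.eq_of_mul_eq_mul_left hd (by omega)
    have hinj2 : Set.InjOn (fun k => m*r - d*k) ↑(Finset.Icc 1 (m*r/d)) := by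
      intro k1 hk1 k2 hk2 h
      simp only [Finset.coe_Icc, Set.mem_Icc] at hk1 hk2
      simp only at h
      have hd1 : d * k1 ≤ m * r := hdkle r k1 hk1.2
      have hd2 : d * k2 ≤ m * r := hdkle r k2 hk2.2
      have h7 : d * k1 = d * k2 := by omega
      exact Nat.eq_of_mul_eq_mul_left hd h7
    rw [Finset.sum_image hinj1, Finset.sum_image hinj2]
    have he1 : ∀ z ∈ Gf, (-1:ℤ)^(d*z + m*r) = ((-1:ℤ)^m)^r * ((-1:ℤ)^d)^z := by
      intro z _
      rw [pow_add, pow_mul, pow_mul]; ring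
    have he2 : ∀ k ∈ Finset.Icc 1 (m*r/d),
        (-1:ℤ)^(m*r - d*k) = ((-1:ℤ)^m)^r * ((-1:ℤ)^d)^k := by
      intro k hk
      rw [Finset.mem_Icc] at hk
      have hdk : d * k ≤ m * r := hdkle r k hk.2
      rw [negpow_sub hdk, pow_mul, pow_mul]
    rw [Finset.sum_congr rfl he1, Finset.sum_congr rfl he2, ← Finset.mul_sum, ← Finset.mul_sum]
    ring




def muAB (A B : ℕ → ℕ) : ℕ → ℕ
  | 0 => 1
  | p+1 => if Even (A (p+1)) then ∏ j ∈ Finset.Icc 1 (p+1), B j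
      else if Even (∏ j ∈ Finset.Icc 1 (p+1), B j) then A (p+1) * muAB A B p
      else muAB A B p

lemma alt_Icc (K : ℕ) : 2 * ∑ k ∈ Finset.Icc 1 K, (-1:ℤ)^k = (-1)^K - 1 := by
  induction K with
  | zero => simp
  | succ n ih =>
    rw [Finset.sum_Icc_succ_top (by omega), mul_add, ih, pow_succ]
    ring

lemma cs_lt (A B : ℕ → ℕ) (p i : ℕ) (h : i ≤ p) :
    compoundSeq A B (p+1) i = A (p+1) * compoundSeq A B p i := by
  unfold compoundSeq
  rw [Finset.prod_Icc_succ_top (by omega : i+1 ≤ p+1)]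
  ring

lemma cs_top (A B : ℕ → ℕ) (p : ℕ) :
    compoundSeq A B (p+1) (p+1) = ∏ j ∈ Finset.Icc 1 (p+1), B j := by
  unfold compoundSeq
  have he : Finset.Icc (p+1+1) (p+1) = (∅ : Finset ℕ) := Finset.Icc_eq_empty (by omega)
  rw [he, Finset.prod_empty, mul_one]

lemma cs_self (A B : ℕ → ℕ) (p : ℕ) :
    compoundSeq A B p p = ∏ j ∈ Finset.Icc 1 p, B j := by
  unfold compoundSeq
  have he : Finset.Icc (p+1) p = (∅ : Finset ℕ) := Finset.Icc_eq_empty (by omega)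
  rw [he, Finset.prod_empty, mul_one]

lemma genBy_add (t : ℕ → ℕ) (n : ℕ) : ∀ a b, a ∈ genBy t n → b ∈ genBy t n →
    a + b ∈ genBy t n := by
  rintro a b ⟨x, rfl⟩ ⟨y, rfl⟩
  refine ⟨fun i => x i + y i, ?_⟩
  rw [← Finset.sum_add_distrib]
  apply Finset.sum_congr rfl
  intro i _
  ring

lemma prod_B_mem (A B : ℕ → ℕ) (p : ℕ) :
    (∏ j ∈ Finset.Icc 1 (p+1), B j) ∈ genBy (compoundSeq A B p) (p+1) := by
  refine ⟨fun i => if i = p then B (p+1) else 0, ?_⟩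
  have h1 : ∀ i ∈ Finset.range (p+1),
      (if i = p then B (p+1) else 0) * compoundSeq A B p i
        = if i = p then B (p+1) * compoundSeq A B p p else 0 := by
    intro i _
    by_cases h : i = p
    · subst h; simp
    · simp [h]
  rw [Finset.sum_congr rfl h1, Finset.sum_ite_eq' (Finset.range (p+1)) p]
  rw [if_pos (Finset.mem_range.2 (by omega)), cs_self]
  rw [Finset.prod_Icc_succ_top (by omega : 1 ≤ p+1)]
  ring

lemma genBy_decomp (A B : ℕ → ℕ) (p : ℕ) :
    genBy (compoundSeq A B (p+1)) (p+2) =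
      {n : ℕ | ∃ s k, s ∈ genBy (compoundSeq A B p) (p+1) ∧
        n = A (p+1) * s + k * (∏ j ∈ Finset.Icc 1 (p+1), B j)} := by
  ext n
  constructor
  · rintro ⟨x, rfl⟩
    refine ⟨∑ i ∈ Finset.range (p+1), x i * compoundSeq A B p i, x (p+1), ⟨x, rfl⟩, ?_⟩
    rw [Finset.sum_range_succ, cs_top]
    congr 1
    rw [Finset.mul_sum]
    apply Finset.sum_congr rfl
    intro i hi
    rw [Finset.mem_range] at hi
    rw [cs_lt A B p i (by omega)]
    ring
  · rintro ⟨s, k, ⟨x, rfl⟩, rfl⟩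
    refine ⟨fun i => if i = p+1 then k else x i, ?_⟩
    have h1 : ∑ i ∈ Finset.range (p+1),
        (if i = p+1 then k else x i) * compoundSeq A B (p+1) i
        = A (p+1) * ∑ i ∈ Finset.range (p+1), x i * compoundSeq A B p i := by
      rw [Finset.mul_sum]
      apply Finset.sum_congr rfl
      intro i hi
      rw [Finset.mem_range] at hi
      rw [if_neg (by omega), cs_lt A B p i (by omega)]
      ring
    show _ = ∑ i ∈ Finset.range (p+2), (if i = p+1 then k else x i) * compoundSeq A B (p+1) i
    rw [Finset.sum_range_succ
      (fun i => (if i = p+1 then k else x i) * compoundSeq A B (p+1) i) (p+1),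
      h1, if_pos rfl, cs_top]

lemma main_gaps (A B : ℕ → ℕ) : ∀ p, IsSuitablePair A B p →
    ∃ Gf : Finset ℕ, ↑Gf = (genBy (compoundSeq A B p) (p+1))ᶜ ∧
      2 * ∑ g ∈ Gf, (-1:ℤ)^g = 1 - muAB A B p := by
  intro p
  induction p with
  | zero =>
    intro _
    refine ⟨∅, ?_, by simp [muAB]⟩
    have h0 : genBy (compoundSeq A B 0) 1 = Set.univ := by
      ext n
      simp only [Set.mem_univ, iff_true]
      refine ⟨fun _ => n, ?_⟩
      simp [compoundSeq]
    rw [h0]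
    simp
  | succ p ih =>
    intro hsuit
    have hsuit' : IsSuitablePair A B p := ⟨fun i h1 h2 => hsuit.1 i h1 (by omega),
      fun i j h1 h2 h3 => hsuit.2 i j h1 h2 (by omega)⟩
    obtain ⟨Gf, hGf, hsum⟩ := ih hsuit'
    set d := A (p+1) with hd'
    set m := ∏ j ∈ Finset.Icc 1 (p+1), B j with hm'
    have hd : 0 < d := (hsuit.1 (p+1) (by omega) (by omega)).1
    have hco : Nat.Coprime d m := by
      apply Nat.Coprime.prod_right
      intro j hj
      rw [Finset.mem_Icc] at hj
      exact hsuit.2 (p+1) j hj.1 hj.2 (le_refl _)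
    obtain ⟨Gf2, hGf2, hsum2⟩ := step_gaps d m hd hco
      (genBy (compoundSeq A B p) (p+1)) (genBy_add _ _) (prod_B_mem A B p) Gf hGf
    refine ⟨Gf2, ?_, ?_⟩
    · rw [hGf2, genBy_decomp]
    · rw [hsum2]
      have hmuu : muAB A B (p+1) = if Even d then m
          else if Even m then d * muAB A B p else muAB A B p := by
        rw [muAB, ← hd', ← hm']
      by_cases hde : Even d
      · -- d even, m odd
        have hmo : ¬ Even m := coprime_not_both_even hco hde
        have h1 : ((-1:ℤ)^d) = 1 := hde.neg_one_pow
        have h2 : ((-1:ℤ)^m) = -1 := (Nat.not_even_iff_odd.1 hmo).neg_one_pow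
        rw [hmuu, if_pos hde]
        have e1 : ∀ r ∈ Finset.range d,
            ((-1:ℤ)^m)^r * ((∑ z ∈ Gf, ((-1:ℤ)^d)^z) + ∑ k ∈ Finset.Icc 1 (m*r/d), ((-1:ℤ)^d)^k)
            = (-1:ℤ)^r * (Gf.card : ℤ) + (-1:ℤ)^r * ((m*r/d : ℕ) : ℤ) := by
          intro r _
          rw [h1, h2]
          simp only [one_pow, Finset.sum_const, nsmul_eq_mul, mul_one, Nat.card_Icc,
            Nat.add_sub_cancel]
          ring
        rw [Finset.sum_congr rfl e1, Finset.sum_add_distrib, ← Finset.sum_mul]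
        rw [negsum d, if_pos hde]
        rw [mul_add, zero_mul, mul_zero, zero_add, sum_floor_even d m hd hde hco]
      · -- d odd
        have h1 : ((-1:ℤ)^d) = -1 := (Nat.not_even_iff_odd.1 hde).neg_one_pow
        by_cases hme : Even m
        · -- m even
          have h2 : ((-1:ℤ)^m) = 1 := hme.neg_one_pow
          rw [hmuu, if_neg hde, if_pos hme]
          have e1 : ∀ r ∈ Finset.range d,
              2 * (((-1:ℤ)^m)^r *
                ((∑ z ∈ Gf, ((-1:ℤ)^d)^z) + ∑ k ∈ Finset.Icc 1 (m*r/d), ((-1:ℤ)^d)^k))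
              = 2 * (∑ z ∈ Gf, (-1:ℤ)^z) + ((-1:ℤ)^(m*r/d) - 1) := by
            intro r _
            rw [h1, h2, one_pow, one_mul, mul_add, ← alt_Icc]
          rw [Finset.mul_sum, Finset.sum_congr rfl e1, Finset.sum_add_distrib,
            Finset.sum_const, Finset.card_range, Finset.sum_sub_distrib,
            sum_floor_odd_even d m hd hco hme, Finset.sum_const, Finset.card_range,
            hsum]
          push_cast
          ring
        · -- m odd
          have h2 : ((-1:ℤ)^m) = -1 := (Nat.not_even_iff_odd.1 hme).neg_one_pow
          rw [hmuu, if_neg hde, if_neg hme]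
          have e1 : ∀ r ∈ Finset.range d,
              2 * (((-1:ℤ)^m)^r *
                ((∑ z ∈ Gf, ((-1:ℤ)^d)^z) + ∑ k ∈ Finset.Icc 1 (m*r/d), ((-1:ℤ)^d)^k))
              = (-1:ℤ)^r * (2 * (∑ z ∈ Gf, (-1:ℤ)^z)) + ((-1:ℤ)^(r + m*r/d) - (-1:ℤ)^r) := by
            intro r _
            rw [h1, h2]
            have : (-1:ℤ)^(r + m*r/d) = (-1:ℤ)^r * (-1:ℤ)^(m*r/d) := pow_add _ _ _
            rw [this]
            have halt := alt_Icc (m*r/d)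
            linear_combination (-1:ℤ)^r * halt
          rw [Finset.mul_sum, Finset.sum_congr rfl e1, Finset.sum_add_distrib,
            ← Finset.sum_mul, negsum d, if_neg hde, Finset.sum_sub_distrib,
            sum_floor_odd_odd d m hd hde hco hme, negsum d, if_neg hde, hsum]
          ring

lemma even_prod_iff (B : ℕ → ℕ) (s : Finset ℕ) :
    Even (∏ j ∈ s, B j) ↔ ∃ j ∈ s, Even (B j) := by
  constructor
  · intro h
    have h2 : (2:ℕ) ∣ ∏ j ∈ s, B j := h.two_dvd
    rw [Nat.prime_two.prime.dvd_finset_prod_iff] at h2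
    obtain ⟨j, hj, hd⟩ := h2
    exact ⟨j, hj, (even_iff_two_dvd).2 hd⟩
  · rintro ⟨j, hj, he⟩
    exact even_iff_two_dvd.2 (dvd_trans he.two_dvd (Finset.dvd_prod_of_mem _ hj))

lemma mu_eq (A B : ℕ → ℕ) : ∀ p, IsSuitablePair A B p →
    muAB A B p =
      (∏ i ∈ Finset.Icc (sInf ({i | 1 ≤ i ∧ i ≤ p ∧ Even (B i)} ∪ {p+1})) p, A i) *
        ∏ i ∈ Finset.Icc 1 (sSup ({0} ∪ {i | 1 ≤ i ∧ i ≤ p ∧ Even (A i)})), B i := by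
  intro p
  induction p with
  | zero =>
    intro _
    have h1 : ({i | 1 ≤ i ∧ i ≤ 0 ∧ Even (B i)} ∪ {0+1} : Set ℕ) = {1} := by
      ext x
      simp only [Set.mem_union, Set.mem_setOf_eq, Set.mem_singleton_iff]
      constructor
      · rintro (⟨ha, hb, _⟩ | h) <;> omega
      · intro h; right; omega
    have h2 : (({0} ∪ {i | 1 ≤ i ∧ i ≤ 0 ∧ Even (A i)}) : Set ℕ) = {0} := by
      ext x
      simp only [Set.mem_union, Set.mem_setOf_eq, Set.mem_singleton_iff]
      constructor
      · rintro (h | ⟨ha, hb, _⟩) <;> omega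
      · intro h; left; omega
    rw [h1, h2]
    simp [muAB]
  | succ p ih =>
    intro hsuit
    have hsuit' : IsSuitablePair A B p := ⟨fun i u1 u2 => hsuit.1 i u1 (by omega),
      fun i j u1 u2 u3 => hsuit.2 i j u1 u2 (by omega)⟩
    by_cases hA : Even (A (p+1))
    · -- A (p+1) even: all B odd, M2 = p+1, m2 = p+2
      have hodd : ∀ j, 1 ≤ j → j ≤ p+1 → ¬ Even (B j) := by
        intro j u1 u2 hBe
        have hg := hsuit.2 (p+1) j u1 u2 (le_refl _)
        have h2d : (2:ℕ) ∣ Nat.gcd (A (p+1)) (B j) := Nat.dvd_gcd hA.two_dvd hBe.two_dvd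
        rw [hg] at h2d
        omega
      have hSb : ({i | 1 ≤ i ∧ i ≤ p+1 ∧ Even (B i)} ∪ {p+1+1} : Set ℕ) = {p+2} := by
        ext x
        simp only [Set.mem_union, Set.mem_setOf_eq, Set.mem_singleton_iff]
        constructor
        · rintro (⟨ha, hb, hc⟩ | h)
          · exact absurd hc (hodd x ha hb)
          · omega
        · intro h; right; omega
      have hSa : sSup (({0} ∪ {i | 1 ≤ i ∧ i ≤ p+1 ∧ Even (A i)}) : Set ℕ) = p+1 := by
        have hne : (({0} ∪ {i | 1 ≤ i ∧ i ≤ p+1 ∧ Even (A i)}) : Set ℕ).Nonempty :=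
          ⟨0, Or.inl rfl⟩
        apply le_antisymm
        · apply csSup_le hne
          intro x hx
          simp only [Set.mem_union, Set.mem_setOf_eq, Set.mem_singleton_iff] at hx
          rcases hx with h | ⟨ha, hb, _⟩ <;> omega
        · apply le_csSup
          · refine ⟨p+1, ?_⟩
            intro x hx
            simp only [Set.mem_union, Set.mem_setOf_eq, Set.mem_singleton_iff] at hx
            rcases hx with h | ⟨ha, hb, _⟩ <;> omega
          · exact Or.inr ⟨by omega, le_refl _, hA⟩
      rw [hSb, hSa]
      have hIcc : Finset.Icc (sInf ({p+2} : Set ℕ)) (p+1) = ∅ := by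
        have : sInf ({p+2} : Set ℕ) = p+2 := by simp
        rw [this]
        exact Finset.Icc_eq_empty (by omega)
      rw [hIcc, Finset.prod_empty, one_mul]
      simp only [muAB, if_pos hA]
    · -- A (p+1) odd
      have hSaEq : (({0} ∪ {i | 1 ≤ i ∧ i ≤ p+1 ∧ Even (A i)}) : Set ℕ)
          = ({0} ∪ {i | 1 ≤ i ∧ i ≤ p ∧ Even (A i)}) := by
        ext x
        simp only [Set.mem_union, Set.mem_setOf_eq, Set.mem_singleton_iff]
        constructor
        · rintro (h | ⟨ha, hb, hc⟩)
          · left; exact h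
          · right
            have hne : x ≠ p+1 := fun he => hA (he ▸ hc)
            exact ⟨ha, by omega, hc⟩
        · rintro (h | ⟨ha, hb, hc⟩)
          · left; exact h
          · right; exact ⟨ha, by omega, hc⟩
      by_cases hme : Even (∏ j ∈ Finset.Icc 1 (p+1), B j)
      · -- some B even
        obtain ⟨j, hjm, hje⟩ := (even_prod_iff B _).1 hme
        rw [Finset.mem_Icc] at hjm
        have hj0ne : ({i | 1 ≤ i ∧ i ≤ p+1 ∧ Even (B i)} ∪ {p+1+1} : Set ℕ).Nonempty :=
          ⟨p+2, Or.inr rfl⟩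
        have hj0mem := Nat.sInf_mem hj0ne
        set j0 := sInf ({i | 1 ≤ i ∧ i ≤ p+1 ∧ Even (B i)} ∪ {p+1+1} : Set ℕ) with hj0
        have hj0le : j0 ≤ p+1 :=
          le_trans (Nat.sInf_le (Or.inl ⟨hjm.1, hjm.2, hje⟩)) hjm.2
        have hj0' : sInf ({i | 1 ≤ i ∧ i ≤ p ∧ Even (B i)} ∪ {p+1} : Set ℕ) = j0 := by
          apply le_antisymm
          · apply Nat.sInf_le
            have hj0mem' := hj0mem
            simp only [Set.mem_union, Set.mem_setOf_eq, Set.mem_singleton_iff] at hj0mem'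
            rcases hj0mem' with ⟨ha, hb, hc⟩ | h
            · rcases Nat.lt_or_ge j0 (p+1) with h4 | h4
              · exact Or.inl ⟨ha, by omega, hc⟩
              · right
                simp only [Set.mem_singleton_iff]
                omega
            · exfalso; omega
          · apply le_csInf ⟨p+1, Or.inr rfl⟩
            intro x hx
            simp only [Set.mem_union, Set.mem_setOf_eq, Set.mem_singleton_iff] at hx
            rcases hx with ⟨ha, hb, hc⟩ | h
            · exact Nat.sInf_le (Or.inl ⟨ha, by omega, hc⟩)
            · omega
        simp only [muAB, if_neg hA, if_pos hme]
        rw [ih hsuit', hSaEq, hj0', Finset.prod_Icc_succ_top hj0le]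
        ring
      · -- all B odd
        have hodd : ∀ j, 1 ≤ j → j ≤ p+1 → ¬ Even (B j) := by
          intro j u1 u2 hBe
          exact hme ((even_prod_iff B _).2 ⟨j, Finset.mem_Icc.2 ⟨u1, u2⟩, hBe⟩)
        have hSb1 : ({i | 1 ≤ i ∧ i ≤ p+1 ∧ Even (B i)} ∪ {p+1+1} : Set ℕ) = {p+2} := by
          ext x
          simp only [Set.mem_union, Set.mem_setOf_eq, Set.mem_singleton_iff]
          constructor
          · rintro (⟨ha, hb, hc⟩ | h)
            · exact absurd hc (hodd x ha hb)
            · omega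
          · intro h; right; omega
        have hSb0 : ({i | 1 ≤ i ∧ i ≤ p ∧ Even (B i)} ∪ {p+1} : Set ℕ) = {p+1} := by
          ext x
          simp only [Set.mem_union, Set.mem_setOf_eq, Set.mem_singleton_iff]
          constructor
          · rintro (⟨ha, hb, hc⟩ | h)
            · exact absurd hc (hodd x ha (by omega))
            · omega
          · intro h; right; omega
        simp only [muAB, if_neg hA, if_neg hme]
        rw [ih hsuit', hSaEq, hSb1, hSb0]
        have he1 : Finset.Icc (sInf ({p+2} : Set ℕ)) (p+1) = ∅ := by
          have : sInf ({p+2} : Set ℕ) = p+2 := by simp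
          rw [this]; exact Finset.Icc_eq_empty (by omega)
        have he2 : Finset.Icc (sInf ({p+1} : Set ℕ)) p = ∅ := by
          have : sInf ({p+1} : Set ℕ) = p+1 := by simp
          rw [this]; exact Finset.Icc_eq_empty (by omega)
        rw [he1, he2]

lemma count_diff (G : Set ℕ) (Gf : Finset ℕ) (hGf : ↑Gf = G) :
    (countOdd G : ℤ) - countEven G = - ∑ g ∈ Gf, (-1:ℤ)^g := by
  classical
  have ho : countOdd G = (Gf.filter (fun x => ¬ Even x)).card := by
    show ({x ∈ G | Odd x}).ncard = _
    have h1 : {x ∈ G | Odd x} = ↑(Gf.filter (fun x => ¬ Even x)) := by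
      rw [Finset.coe_filter, ← hGf]
      ext x
      simp [Nat.not_even_iff_odd]
    rw [h1, Set.ncard_coe_finset]
  have he : countEven G = (Gf.filter (fun x => Even x)).card := by
    show ({x ∈ G | Even x}).ncard = _
    have h1 : {x ∈ G | Even x} = ↑(Gf.filter (fun x => Even x)) := by
      rw [Finset.coe_filter, ← hGf]
      ext x
      simp
    rw [h1, Set.ncard_coe_finset]
  have hsplit := Finset.sum_filter_add_sum_filter_not Gf (fun x => Even x)
    (fun g => (-1:ℤ)^g)
  have h1 : ∑ g ∈ Gf.filter (fun x => Even x), (-1:ℤ)^g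
      = ((Gf.filter (fun x => Even x)).card : ℤ) := by
    calc ∑ g ∈ Gf.filter (fun x => Even x), (-1:ℤ)^g
        = ∑ _g ∈ Gf.filter (fun x => Even x), (1:ℤ) :=
          Finset.sum_congr rfl (fun g hg => ((Finset.mem_filter.1 hg).2).neg_one_pow)
      _ = _ := by rw [Finset.sum_const, nsmul_eq_mul, mul_one]
  have h2 : ∑ g ∈ Gf.filter (fun x => ¬ Even x), (-1:ℤ)^g
      = -((Gf.filter (fun x => ¬ Even x)).card : ℤ) := by
    calc ∑ g ∈ Gf.filter (fun x => ¬ Even x), (-1:ℤ)^g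
        = ∑ _g ∈ Gf.filter (fun x => ¬ Even x), (-1:ℤ) :=
          Finset.sum_congr rfl
            (fun g hg => (Nat.not_even_iff_odd.1 (Finset.mem_filter.1 hg).2).neg_one_pow)
      _ = _ := by rw [Finset.sum_const, nsmul_eq_mul, mul_neg_one]
  rw [ho, he]
  rw [h1, h2] at hsplit
  linarith [hsplit]

/-- For `(A, B)` a suitable pair and `S = ⟨C(A,B)⟩`, with
`M_2(A) = max({0} ∪ {1 ≤ i ≤ p : a_i even})`,
`m_2(B) = min({1 ≤ i ≤ p : b_i even} ∪ {p+1})`,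
`α = ∏_{i = m_2(B)}^{p} a_i` and `β = ∏_{i=1}^{M_2(A)} b_i`, we have
`O(G(S)) - E(G(S)) = (αβ - 1)/2`. -/
theorem parity_compound (A B : ℕ → ℕ) (p : ℕ) (hsuit : IsSuitablePair A B p)
    (M2 m2 : ℕ)
    (hM2 : M2 = sSup ({0} ∪ {i | 1 ≤ i ∧ i ≤ p ∧ Even (A i)}))
    (hm2 : m2 = sInf ({i | 1 ≤ i ∧ i ≤ p ∧ Even (B i)} ∪ {p + 1})) :
    (countOdd (genBy (compoundSeq A B p) (p + 1))ᶜ : ℤ)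
        - (countEven (genBy (compoundSeq A B p) (p + 1))ᶜ : ℤ)
      = (((∏ i ∈ Finset.Icc m2 p, A i) : ℤ) * ((∏ i ∈ Finset.Icc 1 M2, B i) : ℤ) - 1) / 2 := by
  obtain ⟨Gf, hGf, hsum⟩ := main_gaps A B p hsuit
  have hmu := mu_eq A B p hsuit
  subst hM2
  subst hm2
  rw [count_diff _ Gf hGf]
  have hcast : (∏ i ∈ Finset.Icc (sInf ({i | 1 ≤ i ∧ i ≤ p ∧ Even (B i)} ∪ {p + 1})) p,
        (A i : ℤ)) *
      (∏ i ∈ Finset.Icc 1 (sSup ({0} ∪ {i | 1 ≤ i ∧ i ≤ p ∧ Even (A i)})), (B i : ℤ))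
      = ((muAB A B p : ℕ) : ℤ) := by
    rw [← Nat.cast_prod, ← Nat.cast_prod, ← Nat.cast_mul, ← hmu]
  rw [hcast]
  have h2 : ((muAB A B p : ℕ) : ℤ) - 1 = 2 * (- ∑ g ∈ Gf, (-1:ℤ)^g) := by linarith [hsum]
  rw [h2, Int.mul_ediv_cancel_left _ (by norm_num : (2:ℤ) ≠ 0)]
end

section
/- Let (A, B) be a suitable pair of sequences of integers all greater than 1, and let S = ⟨C(A,B)⟩ be the numerical semigroup generated by the compound sequence C(A,B). Then O(G(S)) ≥ E(G(S)), and the following are equivalent: (1) O(G(S)) = E(G(S)); (2) every term of the compound sequence C(A,B) is odd; (3) every term of A and every term of B is odd. -/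
/-!
Write `H_S = ∑_{s ∈ S} X^s` for the Hilbert series of a numerical semigroup `S` with gap set `G`,
and `P_S = 1 - (1 - X) ∑_{g ∈ G} X^g = (1 - X) H_S` for its semigroup polynomial. Then
`P_S(1) = 1` and `P_S(-1) = 1 + 2 (O(G) - E(G))`.

The semigroup generated by the first `k + 2` terms of `C(A,B)` is the gluing `a S + b ℕ` of the
semigroup `S` generated by the first `k + 1` terms (of the compound sequence of the shorter pair)
with `a = a_{k+1}` and `b = b_1 ⋯ b_{k+1}`, which are coprime. Every element of `a S + b ℕ` is
`a s + j b` with `s ∈ S` and a unique `j < a`, so its Hilbert series is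
`H_S(X^a) (1 + X^b + ⋯ + X^{(a-1) b})`, that is `P_{aS+bℕ}(X) [a]_X = P_S(X^a) [a]_{X^b}`.
At `X = -1` this gives `P_{aS+bℕ}(-1) = P_S(-1)` when `a` and `b` are odd, `a P_S(-1)` when `b`
is even and `b` when `a` is even. By induction `P(-1) ≥ 1`, with equality exactly when all `a_i`
and `b_i` are odd.
-/

open Polynomial Finset
open scoped PowerSeries

noncomputable def hilbertSeries (S : Set ℕ) : ℤ⟦X⟧ := PowerSeries.mk (S.indicator 1)

noncomputable def semigroupPoly (G : Finset ℕ) : ℤ[X] := 1 - (1 - X) * ∑ g ∈ G, X ^ g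

lemma coeff_hilbertSeries (S : Set ℕ) (n : ℕ) :
    PowerSeries.coeff n (hilbertSeries S) = S.indicator 1 n :=
  PowerSeries.coeff_mk _ _

lemma hilbertSeries_add_hilbertSeries_compl (S : Set ℕ) :
    hilbertSeries S + hilbertSeries Sᶜ = PowerSeries.mk 1 := by
  ext n
  simp only [map_add, coeff_hilbertSeries, PowerSeries.coeff_mk]
  exact Set.indicator_self_add_compl_apply S 1 n

lemma hilbertSeries_coe_finset (G : Finset ℕ) :
    hilbertSeries G = ((∑ g ∈ G, X ^ g : ℤ[X]) : ℤ⟦X⟧) := by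
  ext n
  simp [coeff_hilbertSeries, Polynomial.coeff_coe, Polynomial.coeff_X_pow, Set.indicator]

lemma one_sub_X_mul_hilbertSeries {S : Set ℕ} {G : Finset ℕ} (hG : (G : Set ℕ) = Sᶜ) :
    (1 - PowerSeries.X) * hilbertSeries S = (semigroupPoly G : ℤ⟦X⟧) := by
  have h := hilbertSeries_add_hilbertSeries_compl S
  rw [← hG, hilbertSeries_coe_finset, ← eq_sub_iff_add_eq] at h
  rw [h, semigroupPoly, mul_sub, mul_comm, PowerSeries.mk_one_mul_one_sub_eq_one]
  push_cast
  ring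

lemma hilbertSeries_image_affine (S : Set ℕ) {a : ℕ} (ha : a ≠ 0) (c : ℕ) :
    hilbertSeries ((fun s => a * s + c) '' S) =
      PowerSeries.X ^ c * PowerSeries.expand a ha (hilbertSeries S) := by
  have hinj : Function.Injective fun s => a * s + c := fun s t h => by
    simpa [ha] using h
  ext n
  rw [PowerSeries.coeff_X_pow_mul', PowerSeries.coeff_expand, coeff_hilbertSeries]
  by_cases hn : ∃ m, a * m + c = n
  · obtain ⟨m, rfl⟩ := hn
    simp only [le_add_self, add_tsub_cancel_right, dvd_mul_right, if_true,
      Nat.mul_div_cancel_left m (Nat.pos_of_ne_zero ha), coeff_hilbertSeries]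
    exact Set.indicator_image hinj
  · rw [Set.indicator_of_notMem (by rintro ⟨m, -, hm⟩; exact hn ⟨m, hm⟩)]
    split_ifs with hc hd
    · obtain ⟨m, hm⟩ := hd
      exact absurd ⟨m, by omega⟩ hn
    all_goals rfl

lemma hilbertSeries_biUnion {ι : Type*} (s : Finset ι) (T : ι → Set ℕ)
    (hT : (s : Set ι).PairwiseDisjoint T) :
    hilbertSeries (⋃ i ∈ s, T i) = ∑ i ∈ s, hilbertSeries (T i) := by
  ext n
  simp only [coeff_hilbertSeries, map_sum, Finset.indicator_biUnion_apply s T hT]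

lemma PowerSeries.expand_coe (Q : ℤ[X]) {a : ℕ} (ha : a ≠ 0) :
    PowerSeries.expand a ha (Q : ℤ⟦X⟧) = (Polynomial.expand ℤ a Q : ℤ⟦X⟧) := by
  ext n
  rw [PowerSeries.coeff_expand, Polynomial.coeff_coe, Polynomial.coeff_coe,
    Polynomial.coeff_expand (Nat.pos_of_ne_zero ha)]

def glue (S : Set ℕ) (a b : ℕ) : Set ℕ := {x | ∃ s ∈ S, ∃ k, x = a * s + k * b}

section
variable {S : Set ℕ} {a b : ℕ}

lemma add_mul_mem_of_add_mem (hS : ∀ s ∈ S, s + b ∈ S) {s : ℕ} (hs : s ∈ S) (q : ℕ) :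
    s + q * b ∈ S := by
  induction q with
  | zero => simpa using hs
  | succ q ih => simpa [add_mul, ← add_assoc] using hS _ ih

lemma glue_eq_biUnion (ha : 0 < a) (hS : ∀ s ∈ S, s + b ∈ S) :
    glue S a b = ⋃ k ∈ range a, (fun s => a * s + k * b) '' S := by
  ext x
  simp only [glue, Set.mem_ofPred_eq, Set.mem_iUnion, Set.mem_image, mem_range]
  constructor
  · rintro ⟨s, hs, k, rfl⟩
    refine ⟨k % a, Nat.mod_lt k ha, s + k / a * b, add_mul_mem_of_add_mem hS hs _, ?_⟩
    conv_rhs => rw [← Nat.div_add_mod k a]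
    ring
  · rintro ⟨k, -, s, hs, rfl⟩
    exact ⟨s, hs, k, rfl⟩

lemma pairwiseDisjoint_image_affine (hab : a.Coprime b) :
    (range a : Set ℕ).PairwiseDisjoint fun k => (fun s => a * s + k * b) '' S := by
  intro k hk k' hk' hne
  refine Set.disjoint_left.mpr ?_
  rintro _ ⟨s, -, rfl⟩ ⟨s', -, h⟩
  have hmod : k' * b ≡ k * b [MOD a] := by
    simpa [Nat.ModEq, Nat.add_mul_mod_self_left] using congrArg (· % a) h
  have := (Nat.ModEq.cancel_right_of_coprime hab hmod).eq_of_lt_of_lt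
    (mem_range.mp hk') (mem_range.mp hk)
  exact hne this.symm

lemma compl_glue_finite (ha : 0 < a) (hab : a.Coprime b) (hfin : Sᶜ.Finite) :
    (glue S a b)ᶜ.Finite := by
  obtain ⟨M, hM⟩ := hfin.bddAbove
  refine (Set.finite_lt_nat (a * (M + 1) + a * b)).subset fun n hn => ?_
  by_contra hlt
  simp only [Set.mem_ofPred_eq, not_lt] at hlt
  obtain ⟨k, hk, hkn⟩ := Nat.exists_mul_mod_eq_of_coprime n hab.symm ha.ne'
  have hkb : b * k ≤ a * b := by nlinarith
  obtain ⟨s, hs⟩ : a ∣ n - b * k :=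
    Nat.dvd_of_mod_eq_zero (Nat.sub_mod_eq_zero_of_mod_eq hkn.symm)
  have hsM : M + 1 ≤ s := Nat.le_of_mul_le_mul_left (by omega) ha
  exact hn ⟨s, by_contra fun hsS => by linarith [hM hsS], k, by rw [mul_comm k b]; omega⟩

lemma hilbertSeries_glue (ha : 0 < a) (hab : a.Coprime b) (hS : ∀ s ∈ S, s + b ∈ S) :
    hilbertSeries (glue S a b) =
      (∑ k ∈ range a, (PowerSeries.X ^ b) ^ k) * PowerSeries.expand a ha.ne' (hilbertSeries S) := by
  rw [glue_eq_biUnion ha hS, hilbertSeries_biUnion _ _ (pairwiseDisjoint_image_affine hab),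
    sum_mul]
  refine sum_congr rfl fun k _ => ?_
  rw [hilbertSeries_image_affine S ha.ne', ← pow_mul, mul_comm b]

lemma semigroupPoly_glue {G G₁ : Finset ℕ} (ha : 0 < a) (hab : a.Coprime b)
    (hS : ∀ s ∈ S, s + b ∈ S) (hG : (G : Set ℕ) = (glue S a b)ᶜ) (hG₁ : (G₁ : Set ℕ) = Sᶜ) :
    semigroupPoly G * ∑ i ∈ range a, X ^ i =
      expand ℤ a (semigroupPoly G₁) * ∑ k ∈ range a, (X ^ b) ^ k := by
  have hX : (1 - X : ℤ[X]) ≠ 0 := fun h => by simpa using congrArg (eval 0) h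
  refine mul_left_cancel₀ hX (Polynomial.coe_injective ℤ ?_)
  rw [← mul_assoc, mul_comm (1 - X), mul_assoc, mul_neg_geom_sum]
  have hsum : ((∑ k ∈ range a, (X ^ b) ^ k : ℤ[X]) : ℤ⟦X⟧) =
      ∑ k ∈ range a, (PowerSeries.X ^ b) ^ k := by
    rw [← coeToPowerSeries.ringHom_apply, map_sum]
    simp
  push_cast [hsum]
  rw [← one_sub_X_mul_hilbertSeries hG, ← PowerSeries.expand_coe _ ha.ne', ← one_sub_X_mul_hilbertSeries hG₁,
    hilbertSeries_glue ha hab hS, map_mul, map_sub, map_one, PowerSeries.expand_X]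
  ring
end

lemma eval_one_semigroupPoly (G : Finset ℕ) : (semigroupPoly G).eval 1 = 1 := by
  simp [semigroupPoly]

lemma eval_neg_one_semigroupPoly (G : Finset ℕ) :
    (semigroupPoly G).eval (-1) = 1 + 2 * ((#{g ∈ G | Odd g} : ℤ) - #{g ∈ G | Even g}) := by
  have hsum : ∑ g ∈ G, (-1 : ℤ) ^ g = #{g ∈ G | Even g} - #{g ∈ G | Odd g} := by
    have hpow (g : ℕ) : (-1 : ℤ) ^ g = (if Even g then 1 else 0) - (if Odd g then 1 else 0) := by
      rcases Nat.even_or_odd g with hg | hg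
      · simp [hg, hg.neg_one_pow, Nat.not_odd_iff_even.mpr hg]
      · simp [hg, hg.neg_one_pow, Nat.not_even_iff_odd.mpr hg]
    simp [hpow, sum_sub_distrib, sum_boole]
  simp only [semigroupPoly, eval_sub, eval_one, eval_mul, eval_X, eval_finsetSum, eval_pow, hsum]
  ring

section
variable {Q Q₁ : ℤ[X]} {a b : ℕ}

lemma eval_neg_one_of_geom_sum_eq_of_odd (h : Q * ∑ i ∈ range a, X ^ i = expand ℤ a Q₁ * ∑ k ∈ range a, (X ^ b) ^ k)
    (ha : Odd a) : Q.eval (-1) = Q₁.eval (-1) * ∑ k ∈ range a, ((-1) ^ b) ^ k := by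
  simpa [eval_finsetSum, expand_eval, neg_one_geom_sum, ha.neg_one_pow, Nat.not_even_iff_odd.mpr ha]
    using congrArg (eval (-1)) h

lemma eval_neg_one_of_geom_sum_eq_of_even (h : Q * ∑ i ∈ range a, X ^ i = expand ℤ a Q₁ * ∑ k ∈ range a, (X ^ b) ^ k)
    (ha₀ : 0 < a) (ha : Even a) (hb : Odd b) : Q.eval (-1) = b * Q₁.eval 1 := by
  -- Both sides of `h` vanish at `-1`; after multiplying by `(1 - X) (1 - X ^ b)` the common
  -- factor `1 - X ^ a` can be cancelled, and what is left does not vanish there.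
  have hXa : (1 - X ^ a : ℤ[X]) ≠ 0 := fun h => by simpa [ha₀.ne'] using congrArg (eval 0) h
  have key : (1 - X ^ a) * (Q * (1 - X ^ b)) =
      (1 - X ^ a) * (expand ℤ a Q₁ * (1 - X) * ∑ j ∈ range b, (X ^ a) ^ j) := by
    calc (1 - X ^ a) * (Q * (1 - X ^ b))
        = (Q * ∑ i ∈ range a, X ^ i) * (1 - X) * (1 - X ^ b) := by
          rw [← mul_neg_geom_sum]; ring
      _ = expand ℤ a Q₁ * (1 - X) * ((1 - X ^ b) * ∑ k ∈ range a, (X ^ b) ^ k) := by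
          rw [h]; ring
      _ = (1 - X ^ a) * (expand ℤ a Q₁ * (1 - X) * ∑ j ∈ range b, (X ^ a) ^ j) := by
          rw [mul_neg_geom_sum, ← pow_mul, mul_comm b, pow_mul, ← mul_neg_geom_sum]; ring
  have := congrArg (eval (-1)) (mul_left_cancel₀ hXa key)
  simp [eval_finsetSum, expand_eval, ha.neg_one_pow, hb.neg_one_pow] at this
  linarith
end

lemma eval_neg_one_semigroupPoly_glue {S : Set ℕ} {G G₁ : Finset ℕ} {a b : ℕ} (ha : 1 < a)
    (hb : 1 < b) (hab : a.Coprime b) (hS : ∀ s ∈ S, s + b ∈ S) (hG : (G : Set ℕ) = (glue S a b)ᶜ)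
    (hG₁ : (G₁ : Set ℕ) = Sᶜ) (hq₁ : 1 ≤ (semigroupPoly G₁).eval (-1)) :
    1 ≤ (semigroupPoly G).eval (-1) ∧
      ((semigroupPoly G).eval (-1) = 1 ↔ (semigroupPoly G₁).eval (-1) = 1 ∧ Odd a ∧ Odd b) := by
  have h := semigroupPoly_glue (by omega) hab hS hG hG₁
  rcases Nat.even_or_odd a with hae | hao
  · have hbo : Odd b := Nat.not_even_iff_odd.mp fun hbe =>
      Nat.not_coprime_of_dvd_of_dvd one_lt_two hae.two_dvd hbe.two_dvd hab
    rw [eval_neg_one_of_geom_sum_eq_of_even h (by omega) hae hbo, eval_one_semigroupPoly]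
    have : (1 : ℤ) < b := by exact_mod_cast hb
    refine ⟨by linarith, by simp [Nat.not_odd_iff_even.mpr hae]; omega⟩
  rw [eval_neg_one_of_geom_sum_eq_of_odd h hao]
  rcases Nat.even_or_odd b with hbe | hbo
  · have : (1 : ℤ) < a := by exact_mod_cast ha
    simp only [hbe.neg_one_pow, one_pow, sum_const, card_range, nsmul_eq_mul, mul_one]
    refine ⟨by nlinarith, by simp [Nat.not_odd_iff_even.mpr hbe]; nlinarith⟩
  · simp [hbo.neg_one_pow, neg_one_geom_sum, Nat.not_even_iff_odd.mpr hao, hao, hbo, hq₁]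

section genBy
variable {t t' : ℕ → ℕ} {n : ℕ}

lemma add_mul_mem_genBy {i : ℕ} (hi : i < n) {s : ℕ} (hs : s ∈ genBy t n) (m : ℕ) :
    s + m * t i ∈ genBy t n := by
  obtain ⟨x, rfl⟩ := hs
  refine ⟨x + Pi.single i m, ?_⟩
  simp [add_mul, sum_add_distrib, Pi.single_apply, hi]

lemma genBy_succ_eq_glue {a : ℕ} (h : ∀ i < n, t' i = a * t i) :
    genBy t' (n + 1) = glue (genBy t n) a (t' n) := by
  ext x
  constructor
  · rintro ⟨y, rfl⟩
    refine ⟨∑ i ∈ range n, y i * t i, ⟨y, rfl⟩, y n, ?_⟩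
    rw [sum_range_succ, mul_sum]
    congr 1
    exact sum_congr rfl fun i hi => by rw [h i (mem_range.mp hi)]; ring
  · rintro ⟨_, ⟨y, rfl⟩, k, rfl⟩
    refine ⟨Function.update y n k, ?_⟩
    rw [sum_range_succ, Function.update_self, mul_sum]
    congr 1
    refine sum_congr rfl fun i hi => ?_
    rw [Function.update_of_ne (mem_range.mp hi).ne, h i (mem_range.mp hi)]
    ring

lemma genBy_one_eq_univ (h : t 0 = 1) : genBy t 1 = Set.univ :=
  Set.eq_univ_of_forall fun x => ⟨fun _ => x, by simp [h]⟩

end genBy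

lemma odd_prod_iff {ι : Type*} {s : Finset ι} {f : ι → ℕ} :
    Odd (∏ i ∈ s, f i) ↔ ∀ i ∈ s, Odd (f i) := by
  simp only [← ZMod.natCast_ne_zero_iff_odd, Nat.cast_prod, prod_ne_zero_iff]

section compoundSeq
variable (A B : ℕ → ℕ) {p : ℕ}

lemma compoundSeq_zero_right (p : ℕ) : compoundSeq A B p 0 = ∏ j ∈ Icc 1 p, A j := by
  simp [compoundSeq]

lemma compoundSeq_self (p : ℕ) : compoundSeq A B p p = ∏ j ∈ Icc 1 p, B j := by
  simp [compoundSeq]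

lemma compoundSeq_succ_of_le {i : ℕ} (hi : i ≤ p) :
    compoundSeq A B (p + 1) i = A (p + 1) * compoundSeq A B p i := by
  rw [compoundSeq, compoundSeq, prod_Icc_succ_top (by omega)]
  ring

lemma compoundSeq_succ_self (p : ℕ) :
    compoundSeq A B (p + 1) (p + 1) = B (p + 1) * compoundSeq A B p p := by
  rw [compoundSeq_self, compoundSeq_self, prod_Icc_succ_top (by omega), mul_comm]

lemma genBy_compoundSeq_succ (p : ℕ) :
    genBy (compoundSeq A B (p + 1)) (p + 1 + 1) =
      glue (genBy (compoundSeq A B p) (p + 1)) (A (p + 1)) (compoundSeq A B (p + 1) (p + 1)) :=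
  genBy_succ_eq_glue fun _ hi => compoundSeq_succ_of_le A B (by omega)

lemma forall_odd_compoundSeq_succ_iff (p : ℕ) :
    (∀ i ≤ p + 1, Odd (compoundSeq A B (p + 1) i)) ↔
      (∀ i ≤ p, Odd (compoundSeq A B p i)) ∧ Odd (A (p + 1)) ∧
        Odd (compoundSeq A B (p + 1) (p + 1)) := by
  constructor
  · intro h
    have hlow (i : ℕ) (hi : i ≤ p) : Odd (A (p + 1)) ∧ Odd (compoundSeq A B p i) := by
      simpa [compoundSeq_succ_of_le A B hi, Nat.odd_mul] using h i (by omega)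
    exact ⟨fun i hi => (hlow i hi).2, (hlow 0 p.zero_le).1, h (p + 1) le_rfl⟩
  · rintro ⟨hc, ha, hb⟩ i hi
    rcases Nat.le_succ_iff.mp hi with hi | rfl
    · rw [compoundSeq_succ_of_le A B hi]
      exact ha.mul (hc i hi)
    · exact hb

lemma forall_odd_compoundSeq_iff (p : ℕ) :
    (∀ i ≤ p, Odd (compoundSeq A B p i)) ↔ ∀ i, 1 ≤ i → i ≤ p → Odd (A i) ∧ Odd (B i) := by
  constructor
  · intro h i hi hip
    have hA := h 0 (Nat.zero_le p)
    have hB := h p le_rfl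
    rw [compoundSeq_zero_right, odd_prod_iff] at hA
    rw [compoundSeq_self, odd_prod_iff] at hB
    exact ⟨hA i (mem_Icc.mpr ⟨hi, hip⟩), hB i (mem_Icc.mpr ⟨hi, hip⟩)⟩
  · intro h i hi
    rw [compoundSeq, Nat.odd_mul, odd_prod_iff, odd_prod_iff]
    exact ⟨fun j hj => (h j (mem_Icc.mp hj).1 ((mem_Icc.mp hj).2.trans hi)).2,
      fun j hj => (h j (le_of_add_le_right (mem_Icc.mp hj).1) (mem_Icc.mp hj).2).1⟩

end compoundSeq

lemma countOdd_coe (G : Finset ℕ) : countOdd G = #{g ∈ G | Odd g} := by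
  rw [countOdd, ← Set.ncard_coe_finset, coe_filter]
  rfl

lemma countEven_coe (G : Finset ℕ) : countEven G = #{g ∈ G | Even g} := by
  rw [countEven, ← Set.ncard_coe_finset, coe_filter]
  rfl

lemma exists_gaps_genBy_compoundSeq (A B : ℕ → ℕ) (p : ℕ)
    (hcop : ∀ i j, 1 ≤ j → j ≤ i → i ≤ p → Nat.gcd (A i) (B j) = 1)
    (hgt : ∀ i, 1 ≤ i → i ≤ p → 1 < A i ∧ 1 < B i) :
    ∃ G : Finset ℕ, (G : Set ℕ) = (genBy (compoundSeq A B p) (p + 1))ᶜ ∧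
      1 ≤ (semigroupPoly G).eval (-1) ∧
      ((semigroupPoly G).eval (-1) = 1 ↔ ∀ i ≤ p, Odd (compoundSeq A B p i)) := by
  induction p with
  | zero =>
    refine ⟨∅, ?_, by simp [semigroupPoly], ?_⟩
    · rw [genBy_one_eq_univ (by simp [compoundSeq])]
      simp
    · simp [semigroupPoly, compoundSeq]
  | succ p ih =>
    obtain ⟨G₁, hG₁, hq₁, hiff⟩ := ih (fun i j hj hji hip => hcop i j hj hji (by omega))
      (fun i hi hip => hgt i hi (by omega))
    have ha : 1 < A (p + 1) := (hgt (p + 1) (by omega) le_rfl).1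
    have hb : 1 < compoundSeq A B (p + 1) (p + 1) := by
      have : 0 < compoundSeq A B p p := by
        rw [compoundSeq_self]
        exact prod_pos fun j hj => by
          linarith [(hgt j (mem_Icc.mp hj).1 ((mem_Icc.mp hj).2.trans p.le_succ)).2]
      rw [compoundSeq_succ_self]
      nlinarith [(hgt (p + 1) (by omega) le_rfl).2]
    have hab : (A (p + 1)).Coprime (compoundSeq A B (p + 1) (p + 1)) := by
      rw [compoundSeq_self]
      exact Nat.Coprime.prod_right fun j hj =>
        hcop (p + 1) j (mem_Icc.mp hj).1 (mem_Icc.mp hj).2 le_rfl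
    have hS (s : ℕ) (hs : s ∈ genBy (compoundSeq A B p) (p + 1)) :
        s + compoundSeq A B (p + 1) (p + 1) ∈ genBy (compoundSeq A B p) (p + 1) := by
      rw [compoundSeq_succ_self]
      exact add_mul_mem_genBy (lt_add_one p) hs _
    have hfin : (genBy (compoundSeq A B (p + 1)) (p + 1 + 1))ᶜ.Finite := by
      rw [genBy_compoundSeq_succ]
      exact compl_glue_finite (by omega) hab (hG₁ ▸ G₁.finite_toSet)
    obtain ⟨hq, hq_eq_one⟩ := eval_neg_one_semigroupPoly_glue ha hb hab hS
      (by rw [hfin.coe_toFinset, genBy_compoundSeq_succ]) hG₁ hq₁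
    refine ⟨hfin.toFinset, hfin.coe_toFinset, hq, ?_⟩
    rw [hq_eq_one, hiff, forall_odd_compoundSeq_succ_iff]

/-- For `(A, B)` a suitable pair of sequences of integers all greater than `1` and
`S = ⟨C(A,B)⟩`: `O(G(S)) ≥ E(G(S))`, and the following are equivalent:
(1) `O(G(S)) = E(G(S))`; (2) every term of `C(A,B)` is odd; (3) every term of `A` and
of `B` is odd. -/
theorem parity_compound_tfae (A B : ℕ → ℕ) (p : ℕ) (hsuit : IsSuitablePair A B p)
    (h2 : ∀ i, 1 ≤ i → i ≤ p → 1 < A i ∧ 1 < B i) :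
    countEven (genBy (compoundSeq A B p) (p + 1))ᶜ
        ≤ countOdd (genBy (compoundSeq A B p) (p + 1))ᶜ ∧
      (countOdd (genBy (compoundSeq A B p) (p + 1))ᶜ
          = countEven (genBy (compoundSeq A B p) (p + 1))ᶜ ↔
        ∀ i ≤ p, Odd (compoundSeq A B p i)) ∧
      (countOdd (genBy (compoundSeq A B p) (p + 1))ᶜ
          = countEven (genBy (compoundSeq A B p) (p + 1))ᶜ ↔
        ∀ i, 1 ≤ i → i ≤ p → Odd (A i) ∧ Odd (B i)) := by
  obtain ⟨G, hG, hq, hq_eq_one⟩ := exists_gaps_genBy_compoundSeq A B p hsuit.2 h2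
  rw [← hG, countOdd_coe, countEven_coe]
  rw [eval_neg_one_semigroupPoly] at hq hq_eq_one
  have hodd_iff : #{g ∈ G | Odd g} = #{g ∈ G | Even g} ↔ ∀ i ≤ p, Odd (compoundSeq A B p i) := by
    rw [← hq_eq_one]
    omega
  exact ⟨by omega, hodd_iff, hodd_iff.trans (forall_odd_compoundSeq_iff A B p)⟩
end

section
/- Let a, b, k be positive integers with gcd(a, b) = 1, and let S = ⟨a^k, a^{k−1}b, …, a b^{k−1}, b^k⟩ be the geometric numerical semigroup generated by the terms a^{k−i} b^i for i = 0, …, k. Then at least one of a, b is odd, and O(G(S)) − E(G(S)) equals 0 if both a and b are odd; equals (a^k − 1)/2 if a is odd and b is even; and equals (b^k − 1)/2 if a is even and b is odd. -/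
/-!
Put `m = a ^ k`. Carrying `y = q * a + d` in the coefficient of `b ^ (j + 1)` into `q * b`
copies of the previous generator shows that every element of `S` is `t * m + w x`, where
`w x = ∑_{i<k} x_i a^(k-1-i) b^(i+1)` with digits `0 ≤ x_i < a`. Since `gcd a b = 1`, the
`a ^ k` numbers `w x` are pairwise incongruent mod `m`, so they form the Apéry set of `S` with
respect to `m`, and the gaps are the numbers below some `w x` in its residue class. For odd `m`,
summing `(-1)^(n+1)` over such a class gives `((-1)^(w x) - (-1)^(w x % m)) / 2`, hence
`2 (O - E) = ∑_x (-1)^(w x) - 1`. That sum is `a ^ k` when `b` is even (each `w x` is even) and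
`1` when `a` and `b` are odd (it factors as `(∑_{d<a} (-1)^d)^k`); the case of even `a` and
odd `b` follows from the symmetry `S(a, b) = S(b, a)`.
-/

open Finset

lemma odd_or_odd_of_coprime {a b : ℕ} (hab : a.Coprime b) : Odd a ∨ Odd b := by
  by_contra! h
  simp only [Nat.not_odd_iff_even] at h
  simpa [hab.gcd_eq_one] using Nat.dvd_gcd h.1.two_dvd h.2.two_dvd

lemma sum_range_neg_one_pow_of_odd {m : ℕ} (hm : Odd m) : ∑ i ∈ range m, (-1 : ℤ) ^ i = 1 := by
  rw [neg_one_geom_sum, if_neg (Nat.not_even_iff_odd.2 hm)]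

lemma neg_one_pow_odd_mul {c : ℕ} (hc : Odd c) (n : ℕ) : (-1 : ℤ) ^ (c * n) = (-1) ^ n := by
  rw [pow_mul, hc.neg_one_pow]

lemma two_mul_sum_neg_one_pow_progression {m : ℕ} (hm : Odd m) (r q : ℕ) :
    2 * ∑ j ∈ range q, (-1 : ℤ) ^ (r + j * m + 1) = (-1) ^ (r + q * m) - (-1) ^ r := by
  induction q with
  | zero => simp
  | succ q ih =>
    rw [sum_range_succ, mul_add, ih, add_mul, one_mul, ← add_assoc, pow_add _ _ m,
      hm.neg_one_pow]
    ring

lemma countOdd_sub_countEven_coe (F : Finset ℕ) :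
    (countOdd ↑F : ℤ) - countEven ↑F = ∑ n ∈ F, (-1 : ℤ) ^ (n + 1) := by
  have hparity (n : ℕ) :
      (-1 : ℤ) ^ (n + 1) = (if Odd n then 1 else 0) - (if Even n then 1 else 0) := by
    rcases Nat.even_or_odd n with hn | hn
    · simp [hn, Nat.not_odd_iff_even.2 hn, pow_succ, hn.neg_one_pow]
    · simp [hn, Nat.not_even_iff_odd.2 hn, pow_succ, hn.neg_one_pow]
  have hodd : countOdd ↑F = #(F.filter Odd) := by simp [countOdd, ← Set.ncard_coe_finset]
  have heven : countEven ↑F = #(F.filter Even) := by simp [countEven, ← Set.ncard_coe_finset]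
  simp only [hodd, heven, hparity, sum_sub_distrib, sum_boole]

lemma mem_image_range_div_iff {m : ℕ} (hm : 0 < m) {n w : ℕ} :
    n ∈ (range (w / m)).image (fun j => w % m + j * m) ↔ n < w ∧ n ≡ w [MOD m] := by
  have hw := Nat.mod_add_div' w m
  rw [mem_image]
  constructor
  · rintro ⟨j, hj, rfl⟩
    refine ⟨?_, by simp [Nat.ModEq, Nat.add_mul_mod_self_right]⟩
    have := Nat.mul_lt_mul_of_pos_right (mem_range.1 hj) hm
    omega
  · rintro ⟨hlt, hmod⟩
    have hn := Nat.mod_add_div' n m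
    refine ⟨n / m, mem_range.2 ?_, hmod ▸ hn⟩
    by_contra hle
    have := Nat.mul_le_mul_right m (not_lt.1 hle)
    rw [Nat.ModEq] at hmod
    omega

section Apery

variable {ι : Type*} [Fintype ι]

/-- The numbers below some `w i` in its residue class mod `m`: the gaps of `{t * m + w i}` when the
`w i` form an Apéry set with respect to `m`. -/
def gapsOfApery (m : ℕ) (w : ι → ℕ) : Finset ℕ :=
  univ.biUnion fun i => (range (w i / m)).image fun j => w i % m + j * m

variable {m : ℕ} {w : ι → ℕ}

lemma image_mod_eq_range (hm : 0 < m) (hinj : Function.Injective fun i => w i % m)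
    (hcard : Fintype.card ι = m) : univ.image (fun i => w i % m) = range m := by
  refine eq_of_subset_of_card_le (fun r hr => ?_) ?_
  · obtain ⟨i, -, rfl⟩ := mem_image.1 hr
    exact mem_range.2 (Nat.mod_lt _ hm)
  · rw [card_range, card_image_of_injective _ hinj, card_univ, hcard]

lemma mem_gapsOfApery_iff (hm : 0 < m) (hinj : Function.Injective fun i => w i % m)
    (hcard : Fintype.card ι = m) (n : ℕ) :
    n ∈ gapsOfApery m w ↔ ∀ t i, n ≠ t * m + w i := by
  simp only [gapsOfApery, mem_biUnion, mem_univ, true_and, mem_image_range_div_iff hm]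
  constructor
  · rintro ⟨i, hlt, hmod⟩ t i' rfl
    obtain rfl : i' = i := hinj (by simpa [Nat.ModEq] using hmod)
    omega
  · intro hn
    obtain ⟨i, -, hi⟩ := mem_image.1
      ((image_mod_eq_range hm hinj hcard).symm ▸ mem_range.2 (Nat.mod_lt n hm))
    refine ⟨i, not_le.1 fun hle => ?_, hi.symm⟩
    obtain ⟨t, ht⟩ := (Nat.modEq_iff_dvd' hle).1 hi
    exact hn t i (by rw [mul_comm] at ht; omega)

theorem two_mul_sum_gapsOfApery (hm : Odd m) (hinj : Function.Injective fun i => w i % m)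
    (hcard : Fintype.card ι = m) :
    2 * ∑ n ∈ gapsOfApery m w, (-1 : ℤ) ^ (n + 1) = ∑ i, (-1 : ℤ) ^ w i - 1 := by
  have hm0 := hm.pos
  have hdisj : Set.PairwiseDisjoint (univ : Finset ι)
      fun i => (range (w i / m)).image fun j => w i % m + j * m := by
    intro i _ i' _ hne
    refine disjoint_left.2 fun n hn hn' => hne (hinj ?_)
    rw [mem_image_range_div_iff hm0] at hn hn'
    exact hn.2.symm.trans hn'.2
  have hclass (i : ι) : 2 * ∑ n ∈ (range (w i / m)).image (fun j => w i % m + j * m),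
      (-1 : ℤ) ^ (n + 1) = (-1) ^ w i - (-1) ^ (w i % m) := by
    rw [sum_image fun j _ j' _ h => Nat.eq_of_mul_eq_mul_right hm0 (Nat.add_left_cancel h),
      two_mul_sum_neg_one_pow_progression hm, Nat.mod_add_div']
  rw [gapsOfApery, sum_biUnion hdisj, mul_sum, sum_congr rfl fun i _ => hclass i,
    sum_sub_distrib, ← sum_image fun i _ i' _ h => hinj h, image_mod_eq_range hm0 hinj hcard,
    sum_range_neg_one_pow_of_odd hm]

end Apery

section GenBy

variable {t : ℕ → ℕ} {n : ℕ}

lemma add_mem_genBy {s s' : ℕ} (hs : s ∈ genBy t n) (hs' : s' ∈ genBy t n) :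
    s + s' ∈ genBy t n := by
  obtain ⟨x, rfl⟩ := hs
  obtain ⟨x', rfl⟩ := hs'
  exact ⟨x + x', by simp only [Pi.add_apply, add_mul, sum_add_distrib]⟩

lemma mul_mem_genBy_s17 (c : ℕ) {j : ℕ} (hj : j < n) : c * t j ∈ genBy t n :=
  ⟨fun i => if i = j then c else 0, by simp [ite_mul, hj]⟩

end GenBy

lemma sum_mul_pow_mul_pow_succ (a b k : ℕ) (x : ℕ → ℕ) :
    ∑ i ∈ range (k + 2), x i * (a ^ (k + 1 - i) * b ^ i)
      = a * ∑ i ∈ range (k + 1), x i * (a ^ (k - i) * b ^ i) + x (k + 1) * b ^ (k + 1) := by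
  rw [sum_range_succ, mul_sum, Nat.sub_self, pow_zero, one_mul]
  congr 1
  refine sum_congr rfl fun i hi => ?_
  rw [Nat.sub_add_comm (mem_range_succ_iff.1 hi), pow_succ]
  ring

def geomSemigroup (a b k : ℕ) : Set ℕ := genBy (fun i => a ^ (k - i) * b ^ i) (k + 1)

lemma geomSemigroup_subset_swap (a b k : ℕ) : geomSemigroup a b k ⊆ geomSemigroup b a k := by
  rintro _ ⟨x, rfl⟩
  refine ⟨fun i => x (k - i), ?_⟩
  rw [← sum_range_reflect]
  refine sum_congr rfl fun i hi => ?_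
  rw [mem_range] at hi
  dsimp only
  rw [show k + 1 - 1 - i = k - i by omega, Nat.sub_sub_self (by omega : i ≤ k), mul_comm (a ^ _)]

lemma geomSemigroup_comm (a b k : ℕ) : geomSemigroup a b k = geomSemigroup b a k :=
  (geomSemigroup_subset_swap a b k).antisymm (geomSemigroup_subset_swap b a k)

/-- `aperyElem a b k x = ∑_{i<k} x_i a^(k-1-i) b^(i+1)`. -/
def aperyElem (a b : ℕ) : (k : ℕ) → (Fin k → Fin a) → ℕ
  | 0, _ => 0
  | k + 1, x => a * aperyElem a b k (Fin.init x) + x (Fin.last k) * b ^ (k + 1)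

section Geometric

variable {a b : ℕ}

lemma mem_geomSemigroup_succ_iff {k n : ℕ} :
    n ∈ geomSemigroup a b (k + 1) ↔
      ∃ s ∈ geomSemigroup a b k, ∃ y, n = a * s + y * b ^ (k + 1) := by
  constructor
  · rintro ⟨x, rfl⟩
    exact ⟨_, ⟨x, rfl⟩, x (k + 1), sum_mul_pow_mul_pow_succ a b k x⟩
  · rintro ⟨_, ⟨x, rfl⟩, y, rfl⟩
    refine ⟨fun i => if i = k + 1 then y else x i, ?_⟩
    rw [sum_mul_pow_mul_pow_succ, if_pos rfl]
    congr 2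
    exact sum_congr rfl fun i hi => by rw [if_neg (by simp at hi; omega)]

lemma aperyElem_snoc {k : ℕ} (x : Fin k → Fin a) (d : Fin a) :
    aperyElem a b (k + 1) (Fin.snoc x d) = a * aperyElem a b k x + d * b ^ (k + 1) := by
  simp only [aperyElem, Fin.init_snoc, Fin.snoc_last]

lemma mem_geomSemigroup_iff (ha : 0 < a) {k n : ℕ} :
    n ∈ geomSemigroup a b k ↔ ∃ t x, n = t * a ^ k + aperyElem a b k x := by
  induction k generalizing n with
  | zero =>
    simpa [geomSemigroup, genBy, aperyElem] using
      (⟨fun _ => n, rfl⟩ : ∃ x : ℕ → ℕ, n = x 0)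
  | succ k ih =>
    rw [mem_geomSemigroup_succ_iff]
    constructor
    · rintro ⟨s, hs, y, rfl⟩
      -- `a * b ^ (k + 1) = a * (b * b ^ k)`: carry `y / a` of them into the last generator of `S_k`
      have hcarry : s + y / a * b * b ^ k ∈ geomSemigroup a b k := by
        refine add_mem_genBy hs ?_
        simpa using
          mul_mem_genBy_s17 (t := fun i => a ^ (k - i) * b ^ i) (y / a * b) (Nat.lt_succ_self k)
      obtain ⟨t, x, hx⟩ := ih.1 hcarry
      refine ⟨t, Fin.snoc x ⟨y % a, Nat.mod_lt _ ha⟩, ?_⟩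
      rw [aperyElem_snoc]
      have hy := Nat.div_add_mod y a
      zify at hx hy ⊢
      linear_combination a * hx - b ^ (k + 1) * hy
    · rintro ⟨t, x, rfl⟩
      refine ⟨_, ih.2 ⟨t, Fin.init x, rfl⟩, x (Fin.last k), ?_⟩
      rw [aperyElem]
      ring

lemma aperyElem_injective_mod (ha : 0 < a) (hab : a.Coprime b) :
    ∀ {k : ℕ} {x x' : Fin k → Fin a},
      aperyElem a b k x ≡ aperyElem a b k x' [MOD a ^ k] → x = x'
  | 0, x, x', _ => Subsingleton.elim x x'
  | k + 1, x, x', h => by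
    rw [aperyElem, aperyElem] at h
    have hlast : x (Fin.last k) = x' (Fin.last k) := by
      have hmod_a := h.of_dvd (dvd_pow_self a k.succ_ne_zero)
      simp only [Nat.ModEq, Nat.mul_add_mod] at hmod_a
      exact Fin.ext ((Nat.ModEq.cancel_right_of_coprime (hab.pow_right _) hmod_a).eq_of_lt_of_lt
        (Fin.isLt _) (Fin.isLt _))
    have hinit : Fin.init x = Fin.init x' := by
      rw [hlast] at h
      refine aperyElem_injective_mod ha hab (Nat.ModEq.mul_left_cancel' ha.ne' ?_)
      rw [← pow_succ']
      exact Nat.ModEq.add_right_cancel' _ h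
    rw [← Fin.snoc_init_self x, ← Fin.snoc_init_self x', hinit, hlast]

lemma compl_geomSemigroup (ha : 0 < a) (hab : a.Coprime b) (k : ℕ) :
    (geomSemigroup a b k)ᶜ = ↑(gapsOfApery (a ^ k) (aperyElem a b k)) := by
  ext n
  rw [Set.mem_compl_iff, mem_coe, mem_gapsOfApery_iff (pow_pos ha k)
    (fun _ _ h => aperyElem_injective_mod ha hab h) (by simp), mem_geomSemigroup_iff ha]
  simp only [not_exists, ne_eq]

lemma even_aperyElem (hb : Even b) {k : ℕ} (x : Fin k → Fin a) : Even (aperyElem a b k x) := by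
  induction k with
  | zero => exact ⟨0, rfl⟩
  | succ k ih =>
    exact ((ih _).mul_left a).add ((hb.pow_of_ne_zero k.succ_ne_zero).mul_left _)

lemma sum_neg_one_pow_aperyElem_of_even (hb : Even b) (k : ℕ) :
    ∑ x : Fin k → Fin a, (-1 : ℤ) ^ aperyElem a b k x = a ^ k := by
  rw [sum_congr rfl fun x _ => (even_aperyElem hb x).neg_one_pow]
  simp

lemma sum_neg_one_pow_aperyElem_of_odd (ha : Odd a) (hb : Odd b) (k : ℕ) :
    ∑ x : Fin k → Fin a, (-1 : ℤ) ^ aperyElem a b k x = 1 := by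
  induction k with
  | zero => simp [aperyElem]
  | succ k ih =>
    rw [← Fintype.sum_equiv (Fin.snocEquiv fun _ => Fin a)
      (fun p => (-1 : ℤ) ^ (a * aperyElem a b k p.2 + p.1 * b ^ (k + 1))) _
      fun p => by rw [← aperyElem_snoc]; rfl]
    have hterm (d : Fin a) (x : Fin k → Fin a) :
        (-1 : ℤ) ^ (a * aperyElem a b k x + d * b ^ (k + 1))
          = (-1) ^ (d : ℕ) * (-1) ^ aperyElem a b k x := by
      rw [pow_add, neg_one_pow_odd_mul ha, mul_comm (d : ℕ), neg_one_pow_odd_mul hb.pow, mul_comm]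
    simp only [Fintype.sum_prod_type, hterm, ← mul_sum, ih, mul_one]
    rw [Fin.sum_univ_eq_sum_range (fun i => (-1 : ℤ) ^ i), sum_range_neg_one_pow_of_odd ha]

lemma two_mul_countOdd_sub_countEven (ha : Odd a) (hab : a.Coprime b) (k : ℕ) :
    2 * ((countOdd (geomSemigroup a b k)ᶜ : ℤ) - countEven (geomSemigroup a b k)ᶜ)
      = ∑ x : Fin k → Fin a, (-1 : ℤ) ^ aperyElem a b k x - 1 := by
  rw [compl_geomSemigroup ha.pos hab, countOdd_sub_countEven_coe,
    two_mul_sum_gapsOfApery ha.pow (fun _ _ h => aperyElem_injective_mod ha.pos hab h) (by simp)]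

lemma countOdd_sub_countEven_of_odd_of_even (ha : Odd a) (hb : Even b) (hab : a.Coprime b)
    (k : ℕ) :
    (countOdd (geomSemigroup a b k)ᶜ : ℤ) - countEven (geomSemigroup a b k)ᶜ
      = ((a ^ k : ℤ) - 1) / 2 := by
  have h := two_mul_countOdd_sub_countEven ha hab k
  rw [sum_neg_one_pow_aperyElem_of_even hb] at h
  omega

end Geometric

theorem parity_geometric_general (a b k : ℕ) (hgcd : Nat.gcd a b = 1) :
    (Odd a ∨ Odd b) ∧
      ((Odd a ∧ Odd b) →
        (countOdd (genBy (fun i => a ^ (k - i) * b ^ i) (k + 1))ᶜ : ℤ)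
          - (countEven (genBy (fun i => a ^ (k - i) * b ^ i) (k + 1))ᶜ : ℤ) = 0) ∧
      ((Odd a ∧ Even b) →
        (countOdd (genBy (fun i => a ^ (k - i) * b ^ i) (k + 1))ᶜ : ℤ)
          - (countEven (genBy (fun i => a ^ (k - i) * b ^ i) (k + 1))ᶜ : ℤ)
          = ((a ^ k : ℤ) - 1) / 2) ∧
      ((Even a ∧ Odd b) →
        (countOdd (genBy (fun i => a ^ (k - i) * b ^ i) (k + 1))ᶜ : ℤ)
          - (countEven (genBy (fun i => a ^ (k - i) * b ^ i) (k + 1))ᶜ : ℤ)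
          = ((b ^ k : ℤ) - 1) / 2) := by
  refine ⟨odd_or_odd_of_coprime hgcd, fun ⟨ha, hb⟩ => ?_, fun ⟨ha, hb⟩ => ?_,
    fun ⟨ha, hb⟩ => ?_⟩
  · have h := two_mul_countOdd_sub_countEven ha hgcd k
    rw [sum_neg_one_pow_aperyElem_of_odd ha hb] at h
    exact (mul_eq_zero.1 h).resolve_left two_ne_zero
  · exact countOdd_sub_countEven_of_odd_of_even ha hb hgcd k
  · have h := countOdd_sub_countEven_of_odd_of_even hb ha (Nat.coprime_comm.1 hgcd) k
    rwa [← geomSemigroup_comm] at h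

/-- For `a, b, k` positive with `gcd a b = 1` and `S` the geometric numerical semigroup
generated by `a^k, a^{k-1} b, …, b^k`: at least one of `a, b` is odd, and
`O(G(S)) - E(G(S))` equals `0` if `a, b` are both odd, `(a^k - 1)/2` if `a` is odd and
`b` is even, and `(b^k - 1)/2` if `a` is even and `b` is odd. -/
theorem parity_geometric (a b k : ℕ) (ha : 0 < a) (hb : 0 < b) (hk : 0 < k)
    (hgcd : Nat.gcd a b = 1) :
    (Odd a ∨ Odd b) ∧
      ((Odd a ∧ Odd b) →
        (countOdd (genBy (fun i => a ^ (k - i) * b ^ i) (k + 1))ᶜ : ℤ)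
          - (countEven (genBy (fun i => a ^ (k - i) * b ^ i) (k + 1))ᶜ : ℤ) = 0) ∧
      ((Odd a ∧ Even b) →
        (countOdd (genBy (fun i => a ^ (k - i) * b ^ i) (k + 1))ᶜ : ℤ)
          - (countEven (genBy (fun i => a ^ (k - i) * b ^ i) (k + 1))ᶜ : ℤ)
          = ((a ^ k : ℤ) - 1) / 2) ∧
      ((Even a ∧ Odd b) →
        (countOdd (genBy (fun i => a ^ (k - i) * b ^ i) (k + 1))ᶜ : ℤ)
          - (countEven (genBy (fun i => a ^ (k - i) * b ^ i) (k + 1))ᶜ : ℤ)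
          = ((b ^ k : ℤ) - 1) / 2) :=
  parity_geometric_general a b k hgcd
end

section
/- Let (A, B) be a suitable pair of sequences of positive integers, A = (a_1, …, a_p), B = (b_1, …, b_p), with compound sequence C(A,B) = (n_0, …, n_p), and let S = ⟨C(A,B)⟩. Then for any index i with 0 ≤ i ≤ p, the Apéry set of S relative to n_i equals the set of all sums ∑_{j ≠ i} n_j x_j over indices 0 ≤ j ≤ p with j ≠ i, where 0 ≤ x_j < b_{j+1} for j < i and 0 ≤ x_j < a_j for j > i. -/
/-- The Apéry set of `S` relative to `t`: the elements `s ∈ S` such that `s - t ∉ S`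
(as integers, i.e. there is no `u ∈ S` with `s = u + t`). -/
def aperySet (S : Set ℕ) (t : ℕ) : Set ℕ :=
  {s ∈ S | ¬ ∃ u ∈ S, s = u + t}

lemma compound_eq_range (A B : ℕ → ℕ) (p i : ℕ) :
    compoundSeq A B p i =
      (∏ j ∈ Finset.range i, B (1 + j)) * ∏ j ∈ Finset.range (p - i), A (i + 1 + j) := by
  unfold compoundSeq
  rw [← Finset.Ico_add_one_right_eq_Icc, Finset.prod_Ico_eq_prod_range,
      ← Finset.Ico_add_one_right_eq_Icc, Finset.prod_Ico_eq_prod_range,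
      show i + 1 - 1 = i by omega, show p + 1 - (i + 1) = p - i by omega]


lemma compound_pos {A B : ℕ → ℕ} {p : ℕ} (hs : IsSuitablePair A B p) {i : ℕ} (hip : i ≤ p) :
    0 < compoundSeq A B p i := by
  unfold compoundSeq
  apply Nat.mul_pos <;> apply Finset.prod_pos <;> intro m hm <;>
    simp only [Finset.mem_Icc] at hm
  · exact (hs.1 m hm.1 (le_trans hm.2 hip)).2
  · exact (hs.1 m (by omega) hm.2).1

lemma compound_key {A B : ℕ → ℕ} {p j : ℕ} (hj : j < p) :
    compoundSeq A B p j * B (j + 1) = compoundSeq A B p (j + 1) * A (j + 1) := by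
  rw [compound_eq_range, compound_eq_range]
  rw [Finset.prod_range_succ, show p - j = (p - (j + 1)) + 1 by omega,
      Finset.prod_range_succ']
  have e1 : ∏ x ∈ Finset.range (p - (j + 1)), A (j + 1 + (x + 1))
      = ∏ x ∈ Finset.range (p - (j + 1)), A (j + 1 + 1 + x) :=
    Finset.prod_congr rfl (fun x _ => by congr 1; omega)
  have e2 : B (1 + j) = B (j + 1) := by rw [Nat.add_comm]
  rw [e1, e2, show j + 1 + 0 = j + 1 by omega]
  ring

lemma compound_top {A B : ℕ → ℕ} {p j : ℕ} (hj : j ≤ p) :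
    compoundSeq A B (p + 1) j = compoundSeq A B p j * A (p + 1) := by
  rw [compound_eq_range, compound_eq_range,
    show p + 1 - j = (p - j) + 1 by omega, Finset.prod_range_succ,
    show j + 1 + (p - j) = p + 1 by omega, mul_assoc]

lemma compound_shift {A B : ℕ → ℕ} {p k : ℕ} :
    compoundSeq A B (p + 1) (k + 1)
      = B 1 * compoundSeq (fun m => A (m + 1)) (fun m => B (m + 1)) p k := by
  rw [compound_eq_range, compound_eq_range, Finset.prod_range_succ',
      show p + 1 - (k + 1) = p - k by omega]
  have e1 : ∏ x ∈ Finset.range k, B (1 + (x + 1))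
      = ∏ x ∈ Finset.range k, B (1 + x + 1) := rfl
  have e2 : ∏ x ∈ Finset.range (p - k), A (k + 1 + 1 + x)
      = ∏ x ∈ Finset.range (p - k), A (k + 1 + x + 1) :=
    Finset.prod_congr rfl (fun x _ => by congr 1; omega)
  rw [e1, e2, show (1:ℕ) + 0 = 1 by omega]
  ring

lemma compound_last (A B : ℕ → ℕ) (p : ℕ) :
    compoundSeq A B p p = ∏ j ∈ Finset.range p, B (1 + j) := by
  rw [compound_eq_range, Nat.sub_self, Finset.prod_range_zero, mul_one]

lemma compound_zero (A B : ℕ → ℕ) (p : ℕ) :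
    compoundSeq A B p 0 = ∏ j ∈ Finset.range p, A (1 + j) := by
  rw [compound_eq_range, Finset.prod_range_zero, one_mul]
  rfl

lemma cop_top {A B : ℕ → ℕ} {p : ℕ} (hs : IsSuitablePair A B (p + 1)) :
    Nat.Coprime (A (p + 1)) (compoundSeq A B (p + 1) (p + 1)) := by
  rw [compound_last]
  exact Nat.Coprime.prod_right fun m hm => by
    simp only [Finset.mem_range] at hm
    exact hs.2 (p + 1) (1 + m) (by omega) (by omega) le_rfl

lemma cop_bot {A B : ℕ → ℕ} {p : ℕ} (hs : IsSuitablePair A B (p + 1)) :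
    Nat.Coprime (B 1) (compoundSeq A B (p + 1) 0) := by
  rw [compound_zero]
  exact Nat.Coprime.prod_right fun m hm => by
    simp only [Finset.mem_range] at hm
    exact Nat.Coprime.symm (hs.2 (1 + m) 1 le_rfl (by omega) (by omega))

lemma suit_mono {A B : ℕ → ℕ} {p : ℕ} (hs : IsSuitablePair A B (p + 1)) :
    IsSuitablePair A B p :=
  ⟨fun i h1 h2 => hs.1 i h1 (by omega),
   fun i j h1 h2 h3 => hs.2 i j h1 h2 (by omega)⟩

lemma suit_shift {A B : ℕ → ℕ} {p : ℕ} (hs : IsSuitablePair A B (p + 1)) :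
    IsSuitablePair (fun m => A (m + 1)) (fun m => B (m + 1)) p :=
  ⟨fun i h1 h2 => hs.1 (i + 1) (by omega) (by omega),
   fun i j h1 h2 h3 => hs.2 (i + 1) (j + 1) (by omega) (by omega) (by omega)⟩

lemma uniq : ∀ (p : ℕ) (A B : ℕ → ℕ), IsSuitablePair A B p → ∀ i, i ≤ p → ∀ x y : ℕ → ℕ,
    (∀ j < i, x j < B (j + 1)) → (∀ j, i < j → j ≤ p → x j < A j) →
    (∀ j < i, y j < B (j + 1)) → (∀ j, i < j → j ≤ p → y j < A j) →
    (∑ j ∈ Finset.range (p + 1), x j * compoundSeq A B p j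
      = ∑ j ∈ Finset.range (p + 1), y j * compoundSeq A B p j) →
    ∀ j, j ≤ p → x j = y j := by
  intro p
  induction p with
  | zero =>
    intro A B hs i hip x y _ _ _ _ hsum j hj
    have h0 : compoundSeq A B 0 0 = 1 := by
      simp [compoundSeq, Finset.Icc_eq_empty (by omega : ¬ (1:ℕ) ≤ 0)]
    rw [Finset.sum_range_one, Finset.sum_range_one, h0, mul_one, mul_one] at hsum
    interval_cases j
    exact hsum
  | succ p ih =>
    intro A B hs i hip x y hx1 hx2 hy1 hy2 hsum
    rcases Nat.lt_or_ge i (p + 1) with hi | hi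
    · -- strip top
      have hrw : ∀ z : ℕ → ℕ, ∑ j ∈ Finset.range (p + 2), z j * compoundSeq A B (p + 1) j
          = (∑ j ∈ Finset.range (p + 1), z j * compoundSeq A B p j) * A (p + 1)
            + z (p + 1) * compoundSeq A B (p + 1) (p + 1) := by
        intro z
        rw [Finset.sum_range_succ]
        congr 1
        rw [Finset.sum_mul]
        refine Finset.sum_congr rfl fun j hj => ?_
        rw [compound_top (Nat.lt_succ_iff.mp (Finset.mem_range.mp hj)), mul_assoc]
      rw [hrw x, hrw y] at hsum
      have hmod : x (p + 1) * compoundSeq A B (p + 1) (p + 1)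
          ≡ y (p + 1) * compoundSeq A B (p + 1) (p + 1) [MOD A (p + 1)] := by
        show _ % _ = _ % _
        calc x (p + 1) * compoundSeq A B (p + 1) (p + 1) % A (p + 1)
            = (x (p + 1) * compoundSeq A B (p + 1) (p + 1)
              + (∑ j ∈ Finset.range (p + 1), x j * compoundSeq A B p j) * A (p + 1))
                % A (p + 1) := (Nat.add_mul_mod_self_right _ _ _).symm
          _ = (y (p + 1) * compoundSeq A B (p + 1) (p + 1)
              + (∑ j ∈ Finset.range (p + 1), y j * compoundSeq A B p j) * A (p + 1))
                % A (p + 1) := by rw [add_comm, hsum, add_comm]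
          _ = _ := Nat.add_mul_mod_self_right _ _ _
      have hxy : x (p + 1) ≡ y (p + 1) [MOD A (p + 1)] := by
        rw [mul_comm (x (p + 1)), mul_comm (y (p + 1))] at hmod
        exact Nat.ModEq.cancel_left_of_coprime (cop_top hs) hmod
      have hxyeq : x (p + 1) = y (p + 1) := by
        have h1 := hx2 (p + 1) (by omega) le_rfl
        have h2 := hy2 (p + 1) (by omega) le_rfl
        unfold Nat.ModEq at hxy
        rwa [Nat.mod_eq_of_lt h1, Nat.mod_eq_of_lt h2] at hxy
      have ha : 0 < A (p + 1) := (hs.1 (p + 1) (by omega) le_rfl).1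
      have hsum' : ∑ j ∈ Finset.range (p + 1), x j * compoundSeq A B p j
          = ∑ j ∈ Finset.range (p + 1), y j * compoundSeq A B p j := by
        rw [hxyeq] at hsum
        exact Nat.eq_of_mul_eq_mul_right ha (Nat.add_right_cancel hsum)
      have hrec := ih A B (suit_mono hs) i (by omega) x y hx1
        (fun j h1 h2 => hx2 j h1 (by omega)) hy1
        (fun j h1 h2 => hy2 j h1 (by omega)) hsum'
      intro j hj
      rcases Nat.lt_or_ge j (p + 1) with h | h
      · exact hrec j (by omega)
      · have : j = p + 1 := by omega
        subst this; exact hxyeq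
    · -- i = p + 1 : strip bottom
      have hieq : i = p + 1 := by omega
      subst hieq
      have hrw : ∀ z : ℕ → ℕ, ∑ j ∈ Finset.range (p + 2), z j * compoundSeq A B (p + 1) j
          = (∑ j ∈ Finset.range (p + 1),
              z (j + 1) * compoundSeq (fun m => A (m + 1)) (fun m => B (m + 1)) p j) * B 1
            + z 0 * compoundSeq A B (p + 1) 0 := by
        intro z
        rw [Finset.sum_range_succ']
        congr 1
        rw [Finset.sum_mul]
        refine Finset.sum_congr rfl fun j hj => ?_
        rw [compound_shift]; ring
      rw [hrw x, hrw y] at hsum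
      have hmod : x 0 * compoundSeq A B (p + 1) 0
          ≡ y 0 * compoundSeq A B (p + 1) 0 [MOD B 1] := by
        show _ % _ = _ % _
        calc x 0 * compoundSeq A B (p + 1) 0 % B 1
            = (x 0 * compoundSeq A B (p + 1) 0
              + (∑ j ∈ Finset.range (p + 1),
                  x (j + 1) * compoundSeq (fun m => A (m + 1)) (fun m => B (m + 1)) p j) * B 1)
                % B 1 := (Nat.add_mul_mod_self_right _ _ _).symm
          _ = (y 0 * compoundSeq A B (p + 1) 0
              + (∑ j ∈ Finset.range (p + 1),
                  y (j + 1) * compoundSeq (fun m => A (m + 1)) (fun m => B (m + 1)) p j) * B 1)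
                % B 1 := by rw [add_comm, hsum, add_comm]
          _ = _ := Nat.add_mul_mod_self_right _ _ _
      have hxy : x 0 ≡ y 0 [MOD B 1] := by
        rw [mul_comm (x 0), mul_comm (y 0)] at hmod
        exact Nat.ModEq.cancel_left_of_coprime (cop_bot hs) hmod
      have hxyeq : x 0 = y 0 := by
        have h1 := hx1 0 (by omega)
        have h2 := hy1 0 (by omega)
        unfold Nat.ModEq at hxy
        rwa [Nat.mod_eq_of_lt h1, Nat.mod_eq_of_lt h2] at hxy
      have hb : 0 < B 1 := (hs.1 1 le_rfl (by omega)).2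
      have hsum' : ∑ j ∈ Finset.range (p + 1),
            x (j + 1) * compoundSeq (fun m => A (m + 1)) (fun m => B (m + 1)) p j
          = ∑ j ∈ Finset.range (p + 1),
            y (j + 1) * compoundSeq (fun m => A (m + 1)) (fun m => B (m + 1)) p j := by
        rw [hxyeq] at hsum
        exact Nat.eq_of_mul_eq_mul_right hb (Nat.add_right_cancel hsum)
      have hrec := ih (fun m => A (m + 1)) (fun m => B (m + 1)) (suit_shift hs) p le_rfl
        (fun j => x (j + 1)) (fun j => y (j + 1))
        (fun j hj => hx1 (j + 1) (by omega))
        (fun j h1 h2 => absurd h1 (by omega))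
        (fun j hj => hy1 (j + 1) (by omega))
        (fun j h1 h2 => absurd h1 (by omega)) hsum'
      intro j hj
      rcases j with _ | k
      · exact hxyeq
      · exact hrec k (by omega)

lemma split2 {s : Finset ℕ} {j k : ℕ} (f : ℕ → ℕ) (hj : j ∈ s) (hk : k ∈ s.erase j) :
    ∑ t ∈ s, f t = f j + (f k + ∑ t ∈ (s.erase j).erase k, f t) := by
  rw [← Finset.add_sum_erase _ f hj, ← Finset.add_sum_erase _ f hk]

lemma normalizeRep (A B : ℕ → ℕ) (p : ℕ) (hs : IsSuitablePair A B p) (i : ℕ) (hip : i ≤ p) :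
    ∀ (N : ℕ) (y : ℕ → ℕ),
      (∑ j ∈ Finset.range (p + 1),
        y j * compoundSeq A B p j * ((i - j) + (j - i))) ≤ N →
      ∃ x : ℕ → ℕ, (∀ j < i, x j < B (j + 1)) ∧ (∀ j, i < j → j ≤ p → x j < A j) ∧
        ∑ j ∈ Finset.range (p + 1), y j * compoundSeq A B p j
          = ∑ j ∈ Finset.range (p + 1), x j * compoundSeq A B p j := by
  intro N
  induction N using Nat.strong_induction_on with
  | _ N ihN =>
  intro y hΦ
  by_cases hgood : (∀ j < i, y j < B (j + 1)) ∧ (∀ j, i < j → j ≤ p → y j < A j)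
  · exact ⟨y, hgood.1, hgood.2, rfl⟩
  set n := compoundSeq A B p with hn
  rcases not_and_or.mp hgood with h | h
  · -- some j < i with y j ≥ B (j+1) : move up
    push_neg at h
    obtain ⟨j, hji, hyj⟩ := h
    set y' : ℕ → ℕ := fun t => if t = j + 1 then y (j + 1) + A (j + 1)
      else if t = j then y j - B (j + 1) else y t with hy'
    have hj1 : j + 1 ∈ Finset.range (p + 1) := by
      simp only [Finset.mem_range]; omega
    have hjm : j ∈ (Finset.range (p + 1)).erase (j + 1) := by
      simp only [Finset.mem_erase, Finset.mem_range]; omega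
    have hyj1 : y' (j + 1) = y (j + 1) + A (j + 1) := by simp [hy']
    have hyjj : y' j = y j - B (j + 1) := by simp [hy']
    have hyrest : ∀ t, t ≠ j → t ≠ j + 1 → y' t = y t := by
      intro t h1 h2; simp [hy', h1, h2]
    have hkey : y j * n j = (y j - B (j + 1)) * n j + A (j + 1) * n (j + 1) := by
      have h1 : (y j - B (j + 1) + B (j + 1)) * n j = y j * n j := by
        rw [Nat.sub_add_cancel hyj]
      rw [add_mul] at h1
      have h2 : B (j + 1) * n j = A (j + 1) * n (j + 1) := by
        rw [mul_comm, hn, compound_key (by omega), mul_comm]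
      linarith
    have hd : (i - j) + (j - i) = ((i - (j + 1)) + ((j + 1) - i)) + 1 := by omega
    have hsum_eq : ∑ t ∈ Finset.range (p + 1), y' t * n t
        = ∑ t ∈ Finset.range (p + 1), y t * n t := by
      rw [split2 (fun t => y' t * n t) hj1 hjm, split2 (fun t => y t * n t) hj1 hjm]
      have hre : ∑ t ∈ ((Finset.range (p + 1)).erase (j + 1)).erase j, y' t * n t
          = ∑ t ∈ ((Finset.range (p + 1)).erase (j + 1)).erase j, y t * n t := by
        refine Finset.sum_congr rfl fun t ht => ?_
        simp only [Finset.mem_erase] at ht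
        rw [hyrest t ht.1 ht.2.1]
      rw [hre, hyj1, hyjj, hkey, add_mul]
      ring
    have hphi : (∑ t ∈ Finset.range (p + 1), y' t * n t * ((i - t) + (t - i)))
          + A (j + 1) * n (j + 1)
        = ∑ t ∈ Finset.range (p + 1), y t * n t * ((i - t) + (t - i)) := by
      rw [split2 (fun t => y' t * n t * ((i - t) + (t - i))) hj1 hjm,
          split2 (fun t => y t * n t * ((i - t) + (t - i))) hj1 hjm]
      have hre : ∑ t ∈ ((Finset.range (p + 1)).erase (j + 1)).erase j,
            y' t * n t * ((i - t) + (t - i))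
          = ∑ t ∈ ((Finset.range (p + 1)).erase (j + 1)).erase j,
            y t * n t * ((i - t) + (t - i)) := by
        refine Finset.sum_congr rfl fun t ht => ?_
        simp only [Finset.mem_erase] at ht
        rw [hyrest t ht.1 ht.2.1]
      rw [hre, hyj1, hyjj, hkey, hd, add_mul]
      ring
    have hpos : 0 < A (j + 1) * n (j + 1) :=
      Nat.mul_pos ((hs.1 (j + 1) (by omega) (by omega)).1) (compound_pos hs (by omega))
    have hlt : (∑ t ∈ Finset.range (p + 1), y' t * n t * ((i - t) + (t - i))) < N := by
      omega
    obtain ⟨x, hb1, hb2, hx⟩ := ihN _ hlt y' le_rfl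
    exact ⟨x, hb1, hb2, hsum_eq ▸ hx⟩
  · -- some j > i with y j ≥ A j : move down
    push_neg at h
    obtain ⟨j, hji, hjp, hyj⟩ := h
    rcases j with _ | k
    · omega
    set y' : ℕ → ℕ := fun t => if t = k then y k + B (k + 1)
      else if t = k + 1 then y (k + 1) - A (k + 1) else y t with hy'
    have hj1 : k ∈ Finset.range (p + 1) := by
      simp only [Finset.mem_range]; omega
    have hjm : k + 1 ∈ (Finset.range (p + 1)).erase k := by
      simp only [Finset.mem_erase, Finset.mem_range]; omega
    have hyk : y' k = y k + B (k + 1) := by simp [hy']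
    have hyk1 : y' (k + 1) = y (k + 1) - A (k + 1) := by simp [hy']
    have hyrest : ∀ t, t ≠ k → t ≠ k + 1 → y' t = y t := by
      intro t h1 h2; simp [hy', h1, h2]
    have hkey : y (k + 1) * n (k + 1)
        = (y (k + 1) - A (k + 1)) * n (k + 1) + B (k + 1) * n k := by
      have h1 : (y (k + 1) - A (k + 1) + A (k + 1)) * n (k + 1) = y (k + 1) * n (k + 1) := by
        rw [Nat.sub_add_cancel hyj]
      rw [add_mul] at h1
      have h2 : A (k + 1) * n (k + 1) = B (k + 1) * n k := by
        rw [mul_comm, hn, ← compound_key (by omega : k < p), mul_comm]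
      linarith
    have hd : (i - (k + 1)) + ((k + 1) - i) = ((i - k) + (k - i)) + 1 := by omega
    have hsum_eq : ∑ t ∈ Finset.range (p + 1), y' t * n t
        = ∑ t ∈ Finset.range (p + 1), y t * n t := by
      rw [split2 (fun t => y' t * n t) hj1 hjm, split2 (fun t => y t * n t) hj1 hjm]
      have hre : ∑ t ∈ ((Finset.range (p + 1)).erase k).erase (k + 1), y' t * n t
          = ∑ t ∈ ((Finset.range (p + 1)).erase k).erase (k + 1), y t * n t := by
        refine Finset.sum_congr rfl fun t ht => ?_
        simp only [Finset.mem_erase] at ht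
        rw [hyrest t ht.2.1 ht.1]
      rw [hre, hyk, hyk1, hkey, add_mul]
      ring
    have hphi : (∑ t ∈ Finset.range (p + 1), y' t * n t * ((i - t) + (t - i)))
          + B (k + 1) * n k
        = ∑ t ∈ Finset.range (p + 1), y t * n t * ((i - t) + (t - i)) := by
      rw [split2 (fun t => y' t * n t * ((i - t) + (t - i))) hj1 hjm,
          split2 (fun t => y t * n t * ((i - t) + (t - i))) hj1 hjm]
      have hre : ∑ t ∈ ((Finset.range (p + 1)).erase k).erase (k + 1),
            y' t * n t * ((i - t) + (t - i))
          = ∑ t ∈ ((Finset.range (p + 1)).erase k).erase (k + 1),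
            y t * n t * ((i - t) + (t - i)) := by
        refine Finset.sum_congr rfl fun t ht => ?_
        simp only [Finset.mem_erase] at ht
        rw [hyrest t ht.2.1 ht.1]
      rw [hre, hyk, hyk1, hkey, hd, add_mul]
      ring
    have hpos : 0 < B (k + 1) * n k :=
      Nat.mul_pos ((hs.1 (k + 1) (by omega) (by omega)).2) (compound_pos hs (by omega))
    have hlt : (∑ t ∈ Finset.range (p + 1), y' t * n t * ((i - t) + (t - i))) < N := by
      omega
    obtain ⟨x, hb1, hb2, hx⟩ := ihN _ hlt y' le_rfl
    exact ⟨x, hb1, hb2, hsum_eq ▸ hx⟩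


/-- For `(A, B)` a suitable pair with `C(A,B) = (n_0, …, n_p)`, `S = ⟨C(A,B)⟩`, and any
`0 ≤ i ≤ p`, the Apéry set of `S` relative to `n_i` is the set of sums
`∑_{j ≠ i} n_j x_j` with `0 ≤ x_j < b_{j+1}` for `j < i` and `0 ≤ x_j < a_j` for
`j > i`. -/
theorem apery_compound_any (A B : ℕ → ℕ) (p : ℕ) (hsuit : IsSuitablePair A B p)
    (i : ℕ) (hip : i ≤ p) :
    aperySet (genBy (compoundSeq A B p) (p + 1)) (compoundSeq A B p i)
      = {s | ∃ x : ℕ → ℕ, (∀ j < i, x j < B (j + 1)) ∧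
          (∀ j, i < j → j ≤ p → x j < A j) ∧
          s = ∑ j ∈ (Finset.range (p + 1)).erase i, x j * compoundSeq A B p j} := by
  have hi : i ∈ Finset.range (p + 1) := by simp only [Finset.mem_range]; omega
  ext s
  simp only [aperySet, genBy, Set.mem_setOf_eq, Set.mem_sep_iff]
  constructor
  · rintro ⟨⟨y, rfl⟩, hnot⟩
    obtain ⟨x, hb1, hb2, hsum⟩ := normalizeRep A B p hsuit i hip _ y le_rfl
    have hdec : ∀ z : ℕ → ℕ, ∑ j ∈ Finset.range (p + 1), z j * compoundSeq A B p j
        = z i * compoundSeq A B p i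
          + ∑ j ∈ (Finset.range (p + 1)).erase i, z j * compoundSeq A B p j :=
      fun z => (Finset.add_sum_erase _ _ hi).symm
    have hxi : x i = 0 := by
      by_contra h0
      apply hnot
      refine ⟨∑ j ∈ Finset.range (p + 1),
        (fun t => if t = i then x i - 1 else x t) j * compoundSeq A B p j, ⟨_, rfl⟩, ?_⟩
      rw [hsum, hdec x, hdec (fun t => if t = i then x i - 1 else x t)]
      simp only [↓reduceIte]
      have hre : ∑ j ∈ (Finset.range (p + 1)).erase i,
            (if j = i then x i - 1 else x j) * compoundSeq A B p j
          = ∑ j ∈ (Finset.range (p + 1)).erase i, x j * compoundSeq A B p j := by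
        refine Finset.sum_congr rfl fun t ht => ?_
        rw [if_neg (Finset.mem_erase.mp ht).1]
      rw [hre]
      have hxx : x i * compoundSeq A B p i
          = (x i - 1) * compoundSeq A B p i + compoundSeq A B p i := by
        have h1 : (x i - 1 + 1) * compoundSeq A B p i = x i * compoundSeq A B p i := by
          rw [Nat.sub_add_cancel (by omega)]
        rw [add_mul, one_mul] at h1
        linarith
      rw [hxx]
      ring
    refine ⟨x, hb1, hb2, ?_⟩
    rw [hsum, hdec x, hxi, zero_mul, zero_add]
  · rintro ⟨x, hb1, hb2, rfl⟩
    set x0 : ℕ → ℕ := fun t => if t = i then 0 else x t with hx0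
    have hx0sum : ∑ j ∈ Finset.range (p + 1), x0 j * compoundSeq A B p j
        = ∑ j ∈ (Finset.range (p + 1)).erase i, x j * compoundSeq A B p j := by
      rw [← Finset.add_sum_erase _ (fun j => x0 j * compoundSeq A B p j) hi]
      simp only [hx0, ↓reduceIte, zero_mul, zero_add]
      refine Finset.sum_congr rfl fun t ht => ?_
      rw [if_neg (Finset.mem_erase.mp ht).1]
    constructor
    · exact ⟨x0, hx0sum.symm⟩
    · rintro ⟨u, ⟨y, rfl⟩, heq⟩
      obtain ⟨z, hz1, hz2, hzsum⟩ := normalizeRep A B p hsuit i hip _ y le_rfl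
      set z' : ℕ → ℕ := fun t => if t = i then z i + 1 else z t with hz'
      have hz'sum : ∑ j ∈ Finset.range (p + 1), z' j * compoundSeq A B p j
          = ∑ j ∈ Finset.range (p + 1), z j * compoundSeq A B p j + compoundSeq A B p i := by
        rw [← Finset.add_sum_erase _ (fun j => z' j * compoundSeq A B p j) hi,
            ← Finset.add_sum_erase _ (fun j => z j * compoundSeq A B p j) hi]
        simp only [hz', ↓reduceIte]
        have hre : ∑ j ∈ (Finset.range (p + 1)).erase i,
              (if j = i then z i + 1 else z j) * compoundSeq A B p j
            = ∑ j ∈ (Finset.range (p + 1)).erase i, z j * compoundSeq A B p j := by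
          refine Finset.sum_congr rfl fun t ht => ?_
          rw [if_neg (Finset.mem_erase.mp ht).1]
        rw [hre, add_mul, one_mul]
        ring
      have hfinal : ∑ j ∈ Finset.range (p + 1), x0 j * compoundSeq A B p j
          = ∑ j ∈ Finset.range (p + 1), z' j * compoundSeq A B p j := by
        rw [hx0sum, heq, hzsum, hz'sum]
      have hcon := uniq p A B hsuit i hip x0 z'
        (fun j hj => by simp only [hx0]; rw [if_neg (by omega : j ≠ i)]; exact hb1 j hj)
        (fun j h1 h2 => by simp only [hx0]; rw [if_neg (by omega : j ≠ i)]; exact hb2 j h1 h2)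
        (fun j hj => by simp only [hz']; rw [if_neg (by omega : j ≠ i)]; exact hz1 j hj)
        (fun j h1 h2 => by simp only [hz']; rw [if_neg (by omega : j ≠ i)]; exact hz2 j h1 h2)
        hfinal i hip
      simp only [hx0, hz', ↓reduceIte] at hcon
      omega
end
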